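/- arXiv:2208.02134 — 13 statements merged into one kernel-verified Lean document; each statement's English description precedes it below -/
import Mathlib

section
/- Let L be a finite semimodular lattice, let [o,i] be an interval of length 2 in L, and let m be an atom of [o,i] that is join-irreducible in L. Let x be a lower cover of i in L with x not in [o,i]. Then there is an atom a of [o,i] such that the set {x ⊓ m, x ⊓ a, o, x, a, m, i} is a seven-element sublattice of L isomorphic to S7 (the semimodular lattice of length 3 with three dual atoms), in which a is the unique dual atom that is a join of two other elements of the sublattice. -/
variable {α : Type*}

/-- A binary relation is a lattice congruence. -/
def IsLatCon [Lattice α] (r : α → α → Prop) : Prop :=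
  Equivalence r ∧ ∀ a b c d : α, r a b → r c d → r (a ⊔ c) (b ⊔ d) ∧ r (a ⊓ c) (b ⊓ d)

/-- `latCg x y a b` : the principal congruence generated by `(x,y)` collapses `(a,b)`. -/
def latCg [Lattice α] (x y a b : α) : Prop :=
  ∀ r : α → α → Prop, IsLatCon r → r x y → r a b

/-- The seven-element semimodular lattice `S₇` with elements `u<y<x<i`, `u<o<a`, `o<m<i`,
dual atoms `x,a,m` of `i`, where `a = y ⊔ o` is the proper join. -/
def IsS7 [Lattice α] (u y o x a m i : α) : Prop :=
  u < y ∧ y < x ∧ x < i ∧ u < o ∧ o < a ∧ o < m ∧ m < i ∧ a < i ∧ y < a ∧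
  x ≠ a ∧ a ≠ m ∧ x ≠ m ∧ y ≠ o ∧
  x ⊓ a = y ∧ a ⊓ m = o ∧ x ⊓ m = u ∧ x ⊓ o = u ∧ y ⊓ o = u ∧ y ⊓ m = u ∧
  x ⊔ a = i ∧ a ⊔ m = i ∧ x ⊔ m = i ∧ y ⊔ o = a ∧ y ⊔ m = i ∧ o ⊔ x = i

/-!
Join-irreducibility of `m` pushes `x ⊓ m` below `o`. Take `t ≤ x` minimal with `t ≰ o`; its lower
covers lie below `o`, so semimodularity makes `a = o ⊔ t` cover `o`, and length 2 makes `a` a dual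
atom. Since `t ≤ x ⊓ a` but `t ≰ o`, the element `x ⊓ a` lies neither below `o` nor below `m`, and
every remaining relation of `S₇` follows by comparing joins and meets of the dual atoms `x, a, m`.
-/

section

variable [Lattice α] {o x a m i : α}

theorem le_of_lt_of_forall_covBy_eq [IsStronglyCoatomic α] (hji : ∀ z : α, z ⋖ m → z = o)
    {z : α} (hz : z < m) : z ≤ o := by
  obtain ⟨s, hzs, hsm⟩ := exists_le_covBy_of_lt hz
  exact hji s hsm ▸ hzs

theorem exists_le_covBy_sup_of_not_le [WellFoundedLT α] [IsStronglyCoatomic α]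
    (hsm : ∀ a b c : α, a ⋖ b → (a ⊔ c = b ⊔ c ∨ a ⊔ c ⋖ b ⊔ c)) (hxo : ¬ x ≤ o) :
    ∃ t ≤ x, o ⋖ o ⊔ t := by
  obtain ⟨t, htx, htmin⟩ := exists_minimal_le_of_wellFoundedLT (fun t => ¬ t ≤ o) x hxo
  obtain ⟨s, -, hst⟩ := exists_le_covBy_of_lt (inf_lt_left.2 htmin.prop : t ⊓ o < t)
  have hso : s ≤ o := not_not.1 (htmin.not_prop_of_lt hst.lt)
  refine ⟨t, htx, ?_⟩
  rcases hsm s t o hst with h | h <;> rw [sup_eq_right.2 hso, sup_comm] at h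
  · exact absurd (sup_eq_left.1 h.symm) htmin.prop
  · exact h

theorem isS7_of_covBy (hxi : x ⋖ i) (hai : a ⋖ i) (hmi : m ⋖ i) (hoa : o ⋖ a) (hom : o < m)
    (hbelow : ∀ z < m, z ≤ o) (hox : ¬ o ≤ x) (hy : ¬ x ⊓ a ≤ o) :
    IsS7 (x ⊓ m) (x ⊓ a) o x a m i := by
  have hmx : ¬ m ≤ x := fun h => hox (hom.le.trans h)
  have huo : x ⊓ m ≤ o := hbelow _ (inf_lt_right.2 hmx)
  have hua : x ⊓ m ≤ a := huo.trans hoa.le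
  have hym : ¬ x ⊓ a ≤ m := fun h => hy ((le_inf inf_le_left h).trans huo)
  have hxa : x ≠ a := fun h => hox (h ▸ hoa.le)
  have ham : a ≠ m := fun h => hy (by rwa [h])
  have hxm : x ≠ m := fun h => hmx h.ge
  have hxai : x ⊔ a = i := hxi.wcovBy.sup_eq hai.wcovBy hxa
  have hami : a ⊔ m = i := hai.wcovBy.sup_eq hmi.wcovBy ham
  have hxmi : x ⊔ m = i := hxi.wcovBy.sup_eq hmi.wcovBy hxm
  have hyoa : x ⊓ a ⊔ o = a :=
    (hoa.eq_or_eq le_sup_right (sup_le inf_le_right hoa.le)).resolve_left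
      fun h => hy (h ▸ le_sup_left)
  have hymi : x ⊓ a ⊔ m = i :=
    (hmi.eq_or_eq le_sup_right (sup_le (inf_le_left.trans hxi.le) hmi.le)).resolve_left
      fun h => hym (h ▸ le_sup_left)
  have hoxi : o ⊔ x = i :=
    (hxi.eq_or_eq le_sup_right (sup_le (hoa.le.trans hai.le) hxi.le)).resolve_left
      fun h => hox (h ▸ le_sup_left)
  have hamo : a ⊓ m = o :=
    le_antisymm (hbelow _ (inf_lt_right.2 fun h => hai.ne (by rw [← hami, sup_eq_left.2 h])))
      (le_inf hoa.le hom.le)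
  have hxo : x ⊓ o = x ⊓ m := le_antisymm (inf_le_inf_left x hom.le) (le_inf inf_le_left huo)
  have hyo : x ⊓ a ⊓ o = x ⊓ m :=
    le_antisymm ((inf_le_inf_right o inf_le_left).trans hxo.le)
      (le_inf (le_inf inf_le_left hua) huo)
  have hymm : x ⊓ a ⊓ m = x ⊓ m :=
    le_antisymm (inf_le_inf_right m inf_le_left) (le_inf (le_inf inf_le_left hua) inf_le_right)
  exact ⟨lt_of_le_of_ne (le_inf inf_le_left hua) fun h => hy (h ▸ huo),
    inf_lt_left.2 fun h => hai.ne (by rw [← hxai, sup_eq_right.2 h]), hxi.lt,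
    lt_of_le_of_ne huo fun h => hox (h ▸ inf_le_left), hoa.lt, hom, hmi.lt, hai.lt,
    inf_lt_right.2 fun h => hox (hoa.le.trans h), hxa, ham, hxm,
    fun h => hox (h ▸ inf_le_left), rfl, hamo, rfl, hxo, hyo, hymm,
    hxai, hami, hxmi, hyoa, hymi, hoxi⟩

end

theorem stmt_0 [Lattice α] [Fintype α]
    (hsm : ∀ a b c : α, a ⋖ b → (a ⊔ c = b ⊔ c ∨ a ⊔ c ⋖ b ⊔ c))
    (o i m x : α)
    (hlen2 : ∀ z ∈ Set.Icc o i, z = o ∨ z = i ∨ (o ⋖ z ∧ z ⋖ i))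
    (hom : o ⋖ m) (hmi : m ⋖ i)
    (hji : ∀ z : α, z ⋖ m → z = o)
    (hxi : x ⋖ i) (hx : x ∉ Set.Icc o i) :
    ∃ a : α, o ⋖ a ∧ a ⋖ i ∧ IsS7 (x ⊓ m) (x ⊓ a) o x a m i := by
  have hox : ¬ o ≤ x := fun h => hx ⟨h, hxi.le⟩
  have hxo : ¬ x ≤ o := fun h => hxi.2 (h.trans_lt hom.lt) hmi.lt
  obtain ⟨t, htx, hoa⟩ := exists_le_covBy_sup_of_not_le hsm hxo
  have hai : o ⊔ t ⋖ i := by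
    rcases hlen2 (o ⊔ t) ⟨le_sup_left, sup_le (hom.le.trans hmi.le) (htx.trans hxi.le)⟩ with
      h | h | h
    · exact absurd h hoa.lt.ne'
    · exact absurd (h ▸ hoa) fun hoi => hoi.2 hom.lt hmi.lt
    · exact h.2
  refine ⟨o ⊔ t, hoa, hai, isS7_of_covBy hxi hai hmi hoa hom.lt
    (fun _ => le_of_lt_of_forall_covBy_eq hji) hox fun h => ?_⟩
  exact hoa.lt.ne' (sup_eq_left.2 ((le_inf htx le_sup_right).trans h))
end

section
/- Let L be any lattice and let p, q be prime intervals in L such that p swings to q, i.e., p ≠ q, 1_p = 1_q, and there is a lower cover a of 1_p distinct from 0_p and 0_q such that {0_p, 0_q, a} generates a sublattice of L isomorphic to S7 in which 0_q is the dual atom that is a proper join. Then the congruence generated by p collapses q (i.e., con(p) ≥ con(q)). -/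
variable {α : Type*}

/-- `p` swings to `q`. -/
def Swings [Lattice α] (p q : α × α) : Prop :=
  p.1 ⋖ p.2 ∧ q.1 ⋖ q.2 ∧ p ≠ q ∧ p.2 = q.2 ∧
  ∃ w : α, w ⋖ p.2 ∧ w ≠ p.1 ∧ w ≠ q.1 ∧
    ∃ u y o : α, IsS7 u y o p.1 q.1 w p.2 ∨ IsS7 u y o w q.1 p.1 p.2

theorem stmt_2 [Lattice α] (p q : α × α) (h : Swings p q) :
    latCg p.1 p.2 q.1 q.2 := by
  obtain ⟨-, -, -, hpq, w, -, -, -, u, y, o, hS | hS⟩ := h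
  · intro r hr hrp
    obtain ⟨h1,h2,h3,h4,h5,h6,h7,h8,h9,_,_,_,_,m1,m2,m3,_,_,_,j1,j2,_,_,_,_⟩ := hS
    have step1 : r (p.1 ⊓ w) (p.2 ⊓ w) := (hr.2 _ _ _ _ hrp (hr.1.refl w)).2
    rw [m3, inf_eq_right.mpr h7.le] at step1
    have step2 : r (u ⊔ q.1) (w ⊔ q.1) := (hr.2 _ _ _ _ step1 (hr.1.refl q.1)).1
    rw [sup_eq_right.mpr (h1.trans h9).le, sup_comm, j2] at step2
    exact hpq ▸ step2
  · intro r hr hrp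
    obtain ⟨h1,h2,h3,h4,h5,h6,h7,h8,h9,_,_,_,_,m1,m2,m3,_,_,_,j1,j2,_,_,_,_⟩ := hS
    have step1 : r (p.1 ⊓ w) (p.2 ⊓ w) := (hr.2 _ _ _ _ hrp (hr.1.refl w)).2
    rw [inf_comm, m3, inf_eq_right.mpr h3.le] at step1
    have step2 : r (u ⊔ q.1) (w ⊔ q.1) := (hr.2 _ _ _ _ step1 (hr.1.refl q.1)).1
    rw [sup_eq_right.mpr (h1.trans h9).le, j1] at step2
    exact hpq ▸ step2
end

section
/- Let L be a finite lattice and let γ be an equivalence relation on L all of whose equivalence classes are intervals. Then γ is a congruence relation if and only if the following condition and its dual hold: whenever x is covered by two distinct elements y and z, and x ≡ y (mod γ), then z ≡ y ⊔ z (mod γ). -/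
variable {α : Type*}

section Aux

variable [Lattice α]

lemma γ_between {γ : α → α → Prop} (hEq : Equivalence γ)
    (hInt : ∀ a : α, ∃ lo hi : α, {x | γ a x} = Set.Icc lo hi)
    {a b c : α} (h : γ a b) (h1 : a ≤ c) (h2 : c ≤ b) : γ a c := by
  obtain ⟨lo, hi, hset⟩ := hInt a
  have ha : a ∈ {x | γ a x} := hEq.refl a
  have hb : b ∈ {x | γ a x} := h
  rw [hset] at ha hb
  have hc : c ∈ Set.Icc lo hi := ⟨ha.1.trans h1, h2.trans hb.2⟩
  rw [← hset] at hc; exact hc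

lemma γ_supcl {γ : α → α → Prop} (hEq : Equivalence γ)
    (hInt : ∀ a : α, ∃ lo hi : α, {x | γ a x} = Set.Icc lo hi)
    {a b c : α} (h1 : γ a b) (h2 : γ a c) : γ a (b ⊔ c) := by
  obtain ⟨lo, hi, hset⟩ := hInt a
  have hb : b ∈ {x | γ a x} := h1
  have hc : c ∈ {x | γ a x} := h2
  rw [hset] at hb hc
  have hs : b ⊔ c ∈ Set.Icc lo hi := ⟨hb.1.trans le_sup_left, sup_le hb.2 hc.2⟩
  rw [← hset] at hs; exact hs

lemma γ_infcl {γ : α → α → Prop} (hEq : Equivalence γ)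
    (hInt : ∀ a : α, ∃ lo hi : α, {x | γ a x} = Set.Icc lo hi)
    {a b c : α} (h1 : γ a b) (h2 : γ a c) : γ a (b ⊓ c) := by
  obtain ⟨lo, hi, hset⟩ := hInt a
  have hb : b ∈ {x | γ a x} := h1
  have hc : c ∈ {x | γ a x} := h2
  rw [hset] at hb hc
  have hs : b ⊓ c ∈ Set.Icc lo hi := ⟨le_inf hb.1 hc.1, inf_le_left.trans hb.2⟩
  rw [← hset] at hs; exact hs

lemma key_aux [Fintype α] {γ : α → α → Prop} (hEq : Equivalence γ)
    (hInt : ∀ a : α, ∃ lo hi : α, {x | γ a x} = Set.Icc lo hi)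
    (hC : ∀ x y z : α, x ⋖ y → x ⋖ z → y ≠ z → γ x y → γ z (y ⊔ z)) :
    ∀ n : ℕ, ∀ x y c : α,
      (Set.Icc x (y ⊔ c)).ncard * (Fintype.card α + 1) + (Set.Icc x y).ncard ≤ n →
      x ≤ y → γ x y → γ (x ⊔ c) (y ⊔ c) := by
  intro n
  induction n using Nat.strong_induction_on with
  | _ n ih =>
  intro x y c hn hxy hγ
  rcases eq_or_lt_of_le hxy with rfl | hlt
  · exact hEq.refl _
  have hCbig : ∀ s : Set α, s.ncard ≤ Fintype.card α := fun s => by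
    simpa [Set.ncard_univ] using Set.ncard_le_ncard (Set.subset_univ s) Set.finite_univ
  by_cases hcov : x ⋖ y
  · by_cases hyc : y ≤ x ⊔ c
    · have : x ⊔ c = y ⊔ c :=
        le_antisymm (sup_le_sup_right hxy c) (sup_le hyc le_sup_right)
      rw [this]; exact hEq.refl _
    · rcases eq_or_lt_of_le (le_sup_left : x ≤ x ⊔ c) with hxe | hxlt
      · have hcx : c ≤ x := by
          have := le_sup_right (a := x) (b := c); rw [← hxe] at this; exact this
        have h1 : y ⊔ c = y := sup_eq_left.mpr (hcx.trans hxy)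
        rw [← hxe, h1]; exact hγ
      · obtain ⟨u, hxu, hule⟩ := exists_covBy_le_of_lt hxlt
        have huy : y ≠ u := fun h => hyc (h ▸ hule)
        have h1 : γ u (y ⊔ u) := hC x y u hcov hxu huy hγ
        have huyc : u ≤ y ⊔ c := hule.trans (sup_le_sup_right hxy c)
        have hyuc : (y ⊔ u) ⊔ c = y ⊔ c := by
          apply le_antisymm
          · exact sup_le (sup_le le_sup_left huyc) le_sup_right
          · exact sup_le_sup_right le_sup_left c
        have hxyc : x ≤ y ⊔ c := hlt.le.trans le_sup_left
        have hsub : Set.Icc u (y ⊔ c) ⊂ Set.Icc x (y ⊔ c) := by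
          refine ⟨Set.Icc_subset_Icc_left hxu.lt.le, fun h => ?_⟩
          exact absurd (h ⟨le_rfl, hxyc⟩).1 hxu.lt.not_ge
        have hlt1 : (Set.Icc u (y ⊔ c)).ncard < (Set.Icc x (y ⊔ c)).ncard :=
          Set.ncard_lt_ncard hsub (Set.toFinite _)
        have hm : (Set.Icc u ((y ⊔ u) ⊔ c)).ncard * (Fintype.card α + 1)
            + (Set.Icc u (y ⊔ u)).ncard < n := by
          rw [hyuc]
          have hb := hCbig (Set.Icc u (y ⊔ u))
          have hge : (Set.Icc x (y ⊔ c)).ncard * (Fintype.card α + 1) ≤ n :=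
            le_trans (Nat.le_add_right _ _) hn
          have hmul : ((Set.Icc u (y ⊔ c)).ncard + 1) * (Fintype.card α + 1)
              ≤ (Set.Icc x (y ⊔ c)).ncard * (Fintype.card α + 1) :=
            Nat.mul_le_mul_right _ hlt1
          have he : ((Set.Icc u (y ⊔ c)).ncard + 1) * (Fintype.card α + 1)
              = (Set.Icc u (y ⊔ c)).ncard * (Fintype.card α + 1) + (Fintype.card α + 1) := by
            ring
          omega
        have := ih _ hm u (y ⊔ u) c le_rfl le_sup_right h1
        have huc : u ⊔ c = x ⊔ c :=
          le_antisymm (sup_le hule le_sup_right) (sup_le_sup_right hxu.lt.le c)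
        rw [huc, hyuc] at this
        exact this
  · obtain ⟨u, hxu, huy⟩ := exists_covBy_le_of_lt hlt
    have huny : u ≠ y := fun h => hcov (h ▸ hxu)
    have hγxu : γ x u := γ_between hEq hInt hγ hxu.lt.le huy
    have hγuy : γ u y := hEq.trans (hEq.symm hγxu) hγ
    have hxyc : x ≤ y ⊔ c := hlt.le.trans le_sup_left
    have hsub : Set.Icc u (y ⊔ c) ⊂ Set.Icc x (y ⊔ c) := by
      refine ⟨Set.Icc_subset_Icc_left hxu.lt.le, fun h => ?_⟩
      exact absurd (h ⟨le_rfl, hxyc⟩).1 hxu.lt.not_ge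
    have hlt1 : (Set.Icc u (y ⊔ c)).ncard < (Set.Icc x (y ⊔ c)).ncard :=
      Set.ncard_lt_ncard hsub (Set.toFinite _)
    have hm1 : (Set.Icc u (y ⊔ c)).ncard * (Fintype.card α + 1)
        + (Set.Icc u y).ncard < n := by
      have hb := hCbig (Set.Icc u y)
      have hge : (Set.Icc x (y ⊔ c)).ncard * (Fintype.card α + 1) ≤ n :=
        le_trans (Nat.le_add_right _ _) hn
      have hmul : ((Set.Icc u (y ⊔ c)).ncard + 1) * (Fintype.card α + 1)
          ≤ (Set.Icc x (y ⊔ c)).ncard * (Fintype.card α + 1) :=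
        Nat.mul_le_mul_right _ hlt1
      have he : ((Set.Icc u (y ⊔ c)).ncard + 1) * (Fintype.card α + 1)
          = (Set.Icc u (y ⊔ c)).ncard * (Fintype.card α + 1) + (Fintype.card α + 1) := by
        ring
      omega
    have h1 := ih _ hm1 u y c le_rfl huy hγuy
    have hsub2 : Set.Icc x u ⊂ Set.Icc x y := by
      refine ⟨Set.Icc_subset_Icc_right huy, fun h => ?_⟩
      have := (h ⟨hlt.le, le_rfl⟩).2
      exact huny (le_antisymm huy this)
    have hlt2 : (Set.Icc x u).ncard < (Set.Icc x y).ncard :=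
      Set.ncard_lt_ncard hsub2 (Set.toFinite _)
    have hsub3 : Set.Icc x (u ⊔ c) ⊆ Set.Icc x (y ⊔ c) :=
      Set.Icc_subset_Icc_right (sup_le_sup_right huy c)
    have hle3 : (Set.Icc x (u ⊔ c)).ncard ≤ (Set.Icc x (y ⊔ c)).ncard :=
      Set.ncard_le_ncard hsub3 (Set.toFinite _)
    have hm2 : (Set.Icc x (u ⊔ c)).ncard * (Fintype.card α + 1)
        + (Set.Icc x u).ncard < n := by
      have : (Set.Icc x (u ⊔ c)).ncard * (Fintype.card α + 1)
          ≤ (Set.Icc x (y ⊔ c)).ncard * (Fintype.card α + 1) :=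
        Nat.mul_le_mul_right _ hle3
      omega
    have h2 := ih _ hm2 x u c le_rfl hxu.lt.le hγxu
    exact hEq.trans h2 h1

lemma key_sup [Fintype α] {γ : α → α → Prop} (hEq : Equivalence γ)
    (hInt : ∀ a : α, ∃ lo hi : α, {x | γ a x} = Set.Icc lo hi)
    (hC : ∀ x y z : α, x ⋖ y → x ⋖ z → y ≠ z → γ x y → γ z (y ⊔ z))
    {x y : α} (c : α) (hxy : x ≤ y) (h : γ x y) : γ (x ⊔ c) (y ⊔ c) :=
  key_aux hEq hInt hC _ x y c le_rfl hxy h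

lemma key_inf [Fintype α] {γ : α → α → Prop} (hEq : Equivalence γ)
    (hInt : ∀ a : α, ∃ lo hi : α, {x | γ a x} = Set.Icc lo hi)
    (hC : ∀ x y z : α, y ⋖ x → z ⋖ x → y ≠ z → γ x y → γ z (y ⊓ z))
    {x y : α} (c : α) (hxy : y ≤ x) (h : γ x y) : γ (x ⊓ c) (y ⊓ c) := by
  let δ : αᵒᵈ → αᵒᵈ → Prop := fun a b => γ (OrderDual.ofDual a) (OrderDual.ofDual b)
  have hEq' : Equivalence δ :=
    ⟨fun a => hEq.refl _, fun h => hEq.symm h, fun h h' => hEq.trans h h'⟩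
  have hInt' : ∀ a : αᵒᵈ, ∃ lo hi : αᵒᵈ, {x | δ a x} = Set.Icc lo hi := by
    intro a
    obtain ⟨lo, hi, hset⟩ := hInt (OrderDual.ofDual a)
    refine ⟨OrderDual.toDual hi, OrderDual.toDual lo, ?_⟩
    ext z
    have : δ a z ↔ OrderDual.ofDual z ∈ Set.Icc lo hi := by
      rw [← hset]; exact Iff.rfl
    simp only [Set.mem_setOf_eq, this, Set.mem_Icc]
    exact ⟨fun h => ⟨h.2, h.1⟩, fun h => ⟨h.2, h.1⟩⟩
  have hC' : ∀ x y z : αᵒᵈ, x ⋖ y → x ⋖ z → y ≠ z → δ x y → δ z (y ⊔ z) := by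
    intro x y z hxy hxz hne hδ
    exact hC (OrderDual.ofDual x) (OrderDual.ofDual y) (OrderDual.ofDual z)
      hxy.ofDual hxz.ofDual (fun h => hne (OrderDual.ofDual.injective h)) hδ
  exact key_sup (α := αᵒᵈ) hEq' hInt' hC'
    (OrderDual.toDual c) (x := OrderDual.toDual x) (y := OrderDual.toDual y) hxy h

end Aux

theorem stmt_3 [Lattice α] [Fintype α] (γ : α → α → Prop)
    (hEq : Equivalence γ)
    (hInt : ∀ a : α, ∃ lo hi : α, {x | γ a x} = Set.Icc lo hi) :
    (∀ a b c d : α, γ a b → γ c d → γ (a ⊔ c) (b ⊔ d) ∧ γ (a ⊓ c) (b ⊓ d)) ↔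
      ((∀ x y z : α, x ⋖ y → x ⋖ z → y ≠ z → γ x y → γ z (y ⊔ z)) ∧
       (∀ x y z : α, y ⋖ x → z ⋖ x → y ≠ z → γ x y → γ z (y ⊓ z))) := by
  constructor
  · intro h
    constructor
    · intro x y z hxy hxz hne hγ
      have h1 := (h x y z z hγ (hEq.refl z)).1
      rwa [sup_eq_right.mpr hxz.lt.le] at h1
    · intro x y z hxy hxz hne hγ
      have h1 := (h x y z z hγ (hEq.refl z)).2
      rwa [inf_eq_right.mpr hxz.lt.le] at h1
  · rintro ⟨hC1, hC2⟩ a b c d hab hcd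
    constructor
    · have h1 : γ a (a ⊔ b) := γ_supcl hEq hInt (hEq.refl a) hab
      have h2 : γ b (a ⊔ b) := γ_supcl hEq hInt (hEq.symm hab) (hEq.refl b)
      have h3 := key_sup hEq hInt hC1 c le_sup_left h1
      have h4 := key_sup hEq hInt hC1 c le_sup_right h2
      have hacbc : γ (a ⊔ c) (b ⊔ c) := hEq.trans h3 (hEq.symm h4)
      have h5 : γ c (c ⊔ d) := γ_supcl hEq hInt (hEq.refl c) hcd
      have h6 : γ d (c ⊔ d) := γ_supcl hEq hInt (hEq.symm hcd) (hEq.refl d)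
      have h7 := key_sup hEq hInt hC1 b le_sup_left h5
      have h8 := key_sup hEq hInt hC1 b le_sup_right h6
      have hbcbd : γ (b ⊔ c) (b ⊔ d) := by
        rw [sup_comm b c, sup_comm b d]
        exact hEq.trans h7 (hEq.symm h8)
      exact hEq.trans hacbc hbcbd
    · have h1 : γ a (a ⊓ b) := γ_infcl hEq hInt (hEq.refl a) hab
      have h2 : γ b (a ⊓ b) := γ_infcl hEq hInt (hEq.symm hab) (hEq.refl b)
      have h3 := key_inf hEq hInt hC2 c inf_le_left h1
      have h4 := key_inf hEq hInt hC2 c inf_le_right h2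
      have hacbc : γ (a ⊓ c) (b ⊓ c) := hEq.trans h3 (hEq.symm h4)
      have h5 : γ c (c ⊓ d) := γ_infcl hEq hInt (hEq.refl c) hcd
      have h6 : γ d (c ⊓ d) := γ_infcl hEq hInt (hEq.symm hcd) (hEq.refl d)
      have h7 := key_inf hEq hInt hC2 b inf_le_left h5
      have h8 := key_inf hEq hInt hC2 b inf_le_right h6
      have hbcbd : γ (b ⊓ c) (b ⊓ d) := by
        rw [inf_comm b c, inf_comm b d]
        exact hEq.trans h7 (hEq.symm h8)
      exact hEq.trans hacbc hbcbd
end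

section
/- (Tab Lemma, first case) Let L be a finite lattice, let m be a doubly irreducible element lying in a covering multi-diamond [o,i] of L (so m_* = o and m^* = i), and let K = L \ {m}, a sublattice. Let α be a congruence of K and let β be the congruence of L generated by α. If o and i are not β-congruent, then the restriction of β to K equals α; i.e., β is a congruence extension of α. -/
variable {α : Type*}

/-- `[o,i]` is a covering multi-diamond: an interval of length 2 with at least 3 atoms,
i.e. isomorphic to `Mₙ` for some `n ≥ 3`. -/
def IsMultiDiamond [Lattice α] (o i : α) : Prop :=
  o < i ∧ (∀ z ∈ Set.Icc o i, z = o ∨ z = i ∨ (o ⋖ z ∧ z ⋖ i)) ∧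
  ∃ x y z : α, o ⋖ x ∧ x ⋖ i ∧ o ⋖ y ∧ y ⋖ i ∧ o ⋖ z ∧ z ⋖ i ∧ x ≠ y ∧ x ≠ z ∧ y ≠ z

/-- `m` is doubly irreducible with unique lower cover `o` and unique upper cover `i`. -/
def DoublyIrred [Lattice α] (o m i : α) : Prop :=
  o ⋖ m ∧ m ⋖ i ∧ (∀ z : α, z ⋖ m → z = o) ∧ (∀ z : α, m ⋖ z → z = i)

/-- A relation is a congruence of the sublattice `K` (as a relation on the ambient lattice). -/
def IsConOn [Lattice α] (K : Set α) (r : α → α → Prop) : Prop :=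
  (∀ x ∈ K, r x x) ∧ (∀ x y : α, r x y → r y x) ∧ (∀ x y z : α, r x y → r y z → r x z) ∧
  (∀ x y : α, r x y → x ∈ K ∧ y ∈ K) ∧
  ∀ a b c d : α, r a b → r c d → r (a ⊔ c) (b ⊔ d) ∧ r (a ⊓ c) (b ⊓ d)

/-- `cgOn K x y a b` : the principal congruence of `K` generated by `(x,y)` collapses `(a,b)`. -/
def cgOn [Lattice α] (K : Set α) (x y a b : α) : Prop :=
  ∀ r : α → α → Prop, IsConOn K r → r x y → r a b

/-- `latConGen r0 a b` : the congruence of `L` generated by the relation `r0` collapses `(a,b)`. -/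
def latConGen [Lattice α] (r0 : α → α → Prop) (a b : α) : Prop :=
  ∀ r : α → α → Prop, IsLatCon r → (∀ u v : α, r0 u v → r u v) → r a b

theorem stmt_6 [Lattice α] [Fintype α] (o m i : α)
    (hd : IsMultiDiamond o i) (hm : DoublyIrred o m i)
    (a0 : α → α → Prop) (ha : IsConOn {x : α | x ≠ m} a0)
    (hne : ¬ latConGen a0 o i) :
    ∀ x y : α, x ≠ m → y ≠ m → (latConGen a0 x y ↔ a0 x y) := by
  obtain ⟨hom, hmi, hlo, hhi⟩ := hm
  have hom' : o < m := hom.lt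
  have hmi' : m < i := hmi.lt
  have hone : o ≠ m := hom'.ne
  have hine : i ≠ m := hmi'.ne'
  -- basic finite-lattice facts
  have lem_le : ∀ c : α, c < m → c ≤ o := by
    intro c h
    obtain ⟨z, hcz, hz⟩ := exists_le_covBy_of_lt h
    exact (hlo z hz) ▸ hcz
  have lem_ge : ∀ c : α, m < c → i ≤ c := by
    intro c h
    obtain ⟨z, hz, hzc⟩ := exists_covBy_le_of_lt h
    exact (hhi z hz) ▸ hzc
  -- for distinct "atoms" of the diamond: join is i, meet is o
  have atoms : ∀ u v : α, o ⋖ u → u ⋖ i → o ⋖ v → v ⋖ i → u ≠ v → u ⊔ v = i ∧ u ⊓ v = o := by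
    intro u v hou hui hov hvi huv
    constructor
    · have h1 : u < u ⊔ v := by
        rcases lt_or_eq_of_le (le_sup_left : u ≤ u ⊔ v) with h | h
        · exact h
        · exfalso
          have hv : v ≤ u := by rw [h]; exact le_sup_right
          rcases lt_or_eq_of_le hv with h' | h'
          · exact hvi.2 h' hui.lt
          · exact huv h'.symm
      have h2 : u ⊔ v ≤ i := sup_le hui.lt.le hvi.lt.le
      rcases lt_or_eq_of_le h2 with h | h
      · exact absurd h (hui.2 h1)
      · exact h
    · have h1 : u ⊓ v < u := by
        rcases lt_or_eq_of_le (inf_le_left : u ⊓ v ≤ u) with h | h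
        · exact h
        · exfalso
          have hv : u ≤ v := by rw [← h]; exact inf_le_right
          rcases lt_or_eq_of_le hv with h' | h'
          · exact hov.2 hou.lt h'
          · exact huv h'
      have h2 : o ≤ u ⊓ v := le_inf hou.lt.le hov.lt.le
      rcases lt_or_eq_of_le h2 with h | h
      · exact absurd h1 (hou.2 h)
      · exact h.symm
  -- two atoms of the diamond distinct from m
  obtain ⟨p, q, hop, hpi, hoq, hqi, hpq, hpm, hqm⟩ :
      ∃ p q : α, o ⋖ p ∧ p ⋖ i ∧ o ⋖ q ∧ q ⋖ i ∧ p ≠ q ∧ p ≠ m ∧ q ≠ m := by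
    obtain ⟨x, y, z, hx1, hx2, hy1, hy2, hz1, hz2, hxy, hxz, hyz⟩ := hd.2.2
    by_cases hxm : x = m
    · exact ⟨y, z, hy1, hy2, hz1, hz2, hyz, fun h => hxy (hxm.trans h.symm),
        fun h => hxz (hxm.trans h.symm)⟩
    · by_cases hym : y = m
      · exact ⟨x, z, hx1, hx2, hz1, hz2, hxz, hxm, fun h => hyz (hym.trans h.symm)⟩
      · exact ⟨x, y, hx1, hx2, hy1, hy2, hxy, hxm, hym⟩
  obtain ⟨hmp_sup, hmp_inf⟩ := atoms m p hom hmi hop hpi (fun h => hpm h.symm)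
  obtain ⟨hmq_sup, hmq_inf⟩ := atoms m q hom hmi hoq hqi (fun h => hqm h.symm)
  obtain ⟨hpq_sup, hpq_inf⟩ := atoms p q hop hpi hoq hqi hpq
  -- β := latConGen a0 is itself a lattice congruence
  set β := latConGen a0 with hβ
  have βcon : IsLatCon β := by
    constructor
    · constructor
      · intro x r hr _; exact hr.1.refl x
      · intro x y h r hr h0; exact hr.1.symm (h r hr h0)
      · intro x y z h1 h2 r hr h0; exact hr.1.trans (h1 r hr h0) (h2 r hr h0)
    · intro a b c d h1 h2
      constructor
      · intro r hr h0; exact (hr.2 a b c d (h1 r hr h0) (h2 r hr h0)).1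
      · intro r hr h0; exact (hr.2 a b c d (h1 r hr h0) (h2 r hr h0)).2
  have βa0 : ∀ u v : α, a0 u v → β u v := fun u v h r hr h0 => h0 u v h
  -- collapsing m with i (or o with m) forces collapsing o with i
  have step2 : β m i → False := by
    intro h
    have hp : β o p := by
      have := (βcon.2 m i p p h (βcon.1.refl p)).2
      rwa [hmp_inf, inf_eq_right.mpr hpi.lt.le] at this
    have hq : β o q := by
      have := (βcon.2 m i q q h (βcon.1.refl q)).2
      rwa [hmq_inf, inf_eq_right.mpr hqi.lt.le] at this
    have := (βcon.2 o p o q hp hq).1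
    rw [sup_idem, hpq_sup] at this
    exact hne this
  have step3 : β o m → False := by
    intro h
    have hp : β p i := by
      have := (βcon.2 o m p p h (βcon.1.refl p)).1
      rwa [sup_eq_right.mpr hop.lt.le, hmp_sup] at this
    have hq : β q i := by
      have := (βcon.2 o m q q h (βcon.1.refl q)).1
      rwa [sup_eq_right.mpr hoq.lt.le, hmq_sup] at this
    have := (βcon.2 p i q i hp hq).2
    rw [hpq_inf, inf_idem] at this
    exact hne this
  -- key: a β-pair cannot straddle m from below
  have keyJoin : ∀ c d : α, β c d → c ≤ m → ¬ d ≤ m → False := by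
    intro c d h hc hd
    have h1 : m < m ⊔ d := lt_of_le_of_ne le_sup_left
      (fun h' => hd (sup_eq_left.mp h'.symm))
    have h2 : i ≤ m ⊔ d := lem_ge _ h1
    have h3 : β m (m ⊔ d) := by
      have := (βcon.2 m m c d (βcon.1.refl m) h).1
      rwa [sup_eq_left.mpr hc] at this
    have h4 : β m i := by
      have := (βcon.2 m (m ⊔ d) i i h3 (βcon.1.refl i)).2
      rwa [inf_eq_left.mpr hmi'.le, inf_eq_right.mpr h2] at this
    exact step2 h4
  have keyMeet : ∀ c d : α, β c d → m ≤ c → ¬ m ≤ d → False := by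
    intro c d h hc hd
    have h1 : m ⊓ d < m := lt_of_le_of_ne inf_le_left
      (fun h' => hd (inf_eq_left.mp h'))
    have h2 : m ⊓ d ≤ o := lem_le _ h1
    have h3 : β m (m ⊓ d) := by
      have := (βcon.2 m m c d (βcon.1.refl m) h).2
      rwa [inf_eq_left.mpr hc] at this
    have h4 : β o m := by
      have := (βcon.2 m (m ⊓ d) o o h3 (βcon.1.refl o)).1
      rw [sup_eq_left.mpr hom'.le, sup_eq_right.mpr h2] at this
      exact βcon.1.symm this
    exact step3 h4
  -- the explicit extension congruence
  set r : α → α → Prop :=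
    fun a b => (a = m ∧ b = m) ∨ (a ≠ m ∧ b ≠ m ∧ a0 a b) with hrdef
  obtain ⟨haR, haS, haT, haM, haC⟩ := ha
  -- mixing m with an a0-pair
  have mix : ∀ c d : α, a0 c d → r (m ⊔ c) (m ⊔ d) ∧ r (m ⊓ c) (m ⊓ d) := by
    intro c d hcd
    obtain ⟨hcm, hdm⟩ := haM c d hcd
    have hβcd : β c d := βa0 c d hcd
    constructor
    · by_cases hc : c ≤ m
      · have hdle : d ≤ m := by
          by_contra hd
          exact keyJoin c d hβcd hc hd
        left
        rw [sup_eq_left.mpr hc, sup_eq_left.mpr hdle]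
        exact ⟨rfl, rfl⟩
      · have hdle : ¬ d ≤ m := by
          intro hd
          exact keyJoin d c (βcon.1.symm hβcd) hd hc
        have e1 : m ⊔ c = i ⊔ c := by
          apply le_antisymm
          · exact sup_le_sup_right hmi'.le c
          · exact sup_le (lem_ge _ (lt_of_le_of_ne le_sup_left
              (fun h' => hc (sup_eq_left.mp h'.symm)))) le_sup_right
        have e2 : m ⊔ d = i ⊔ d := by
          apply le_antisymm
          · exact sup_le_sup_right hmi'.le d
          · exact sup_le (lem_ge _ (lt_of_le_of_ne le_sup_left
              (fun h' => hdle (sup_eq_left.mp h'.symm)))) le_sup_right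
        right
        rw [e1, e2]
        refine ⟨?_, ?_, ?_⟩
        · exact fun h => absurd (h ▸ le_sup_left : i ≤ m) (hmi'.not_ge)
        · exact fun h => absurd (h ▸ le_sup_left : i ≤ m) (hmi'.not_ge)
        · exact (haC i i c d (haR i hine) hcd).1
    · by_cases hc : m ≤ c
      · have hdle : m ≤ d := by
          by_contra hd
          exact keyMeet c d hβcd hc hd
        left
        rw [inf_eq_left.mpr hc, inf_eq_left.mpr hdle]
        exact ⟨rfl, rfl⟩
      · have hdle : ¬ m ≤ d := by
          intro hd
          exact keyMeet d c (βcon.1.symm hβcd) hd hc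
        have e1 : m ⊓ c = o ⊓ c := by
          apply le_antisymm
          · exact le_inf (lem_le _ (lt_of_le_of_ne inf_le_left
              (fun h' => hc (inf_eq_left.mp h')))) inf_le_right
          · exact inf_le_inf_right c hom'.le
        have e2 : m ⊓ d = o ⊓ d := by
          apply le_antisymm
          · exact le_inf (lem_le _ (lt_of_le_of_ne inf_le_left
              (fun h' => hdle (inf_eq_left.mp h')))) inf_le_right
          · exact inf_le_inf_right d hom'.le
        right
        rw [e1, e2]
        refine ⟨?_, ?_, ?_⟩
        · exact fun h => absurd (h ▸ inf_le_left : m ≤ o) (hom'.not_ge)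
        · exact fun h => absurd (h ▸ inf_le_left : m ≤ o) (hom'.not_ge)
        · exact (haC o o c d (haR o hone) hcd).2
  have hrcon : IsLatCon r := by
    constructor
    · constructor
      · intro x
        by_cases hx : x = m
        · exact Or.inl ⟨hx, hx⟩
        · exact Or.inr ⟨hx, hx, haR x hx⟩
      · rintro x y (⟨h1, h2⟩ | ⟨h1, h2, h3⟩)
        · exact Or.inl ⟨h2, h1⟩
        · exact Or.inr ⟨h2, h1, haS x y h3⟩
      · rintro x y z (⟨h1, h2⟩ | ⟨h1, h2, h3⟩) (⟨g1, g2⟩ | ⟨g1, g2, g3⟩)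
        · exact Or.inl ⟨h1, g2⟩
        · exact absurd h2 g1
        · exact absurd g1 h2
        · exact Or.inr ⟨h1, g2, haT x y z h3 g3⟩
    · rintro a b c d (⟨h1, h2⟩ | ⟨ham, hbm, hab⟩) (⟨h3, h4⟩ | ⟨hcm, hdm, hcd⟩)
      · rw [h1, h2, h3, h4]
        exact ⟨Or.inl ⟨sup_idem m, sup_idem m⟩, Or.inl ⟨inf_idem m, inf_idem m⟩⟩
      · rw [h1, h2]
        exact mix c d hcd
      · rw [h3, h4, sup_comm a m, sup_comm b m, inf_comm a m, inf_comm b m]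
        exact mix a b hab
      · constructor
        · have hsup : a0 (a ⊔ c) (b ⊔ d) := (haC a b c d hab hcd).1
          refine Or.inr ⟨?_, ?_, hsup⟩
          · intro h
            have ha' : a < m := lt_of_le_of_ne (h ▸ le_sup_left) ham
            have hc' : c < m := lt_of_le_of_ne (h ▸ le_sup_right) hcm
            have : a ⊔ c ≤ o := sup_le (lem_le a ha') (lem_le c hc')
            exact absurd (h ▸ this : m ≤ o) (hom'.not_ge)
          · intro h
            have hb' : b < m := lt_of_le_of_ne (h ▸ le_sup_left) hbm
            have hd' : d < m := lt_of_le_of_ne (h ▸ le_sup_right) hdm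
            have : b ⊔ d ≤ o := sup_le (lem_le b hb') (lem_le d hd')
            exact absurd (h ▸ this : m ≤ o) (hom'.not_ge)
        · have hinf : a0 (a ⊓ c) (b ⊓ d) := (haC a b c d hab hcd).2
          refine Or.inr ⟨?_, ?_, hinf⟩
          · intro h
            have ha' : m < a := lt_of_le_of_ne (h ▸ inf_le_left) (fun h' => ham h'.symm)
            have hc' : m < c := lt_of_le_of_ne (h ▸ inf_le_right) (fun h' => hcm h'.symm)
            have : i ≤ a ⊓ c := le_inf (lem_ge a ha') (lem_ge c hc')
            exact absurd (h ▸ this : i ≤ m) (hmi'.not_ge)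
          · intro h
            have hb' : m < b := lt_of_le_of_ne (h ▸ inf_le_left) (fun h' => hbm h'.symm)
            have hd' : m < d := lt_of_le_of_ne (h ▸ inf_le_right) (fun h' => hdm h'.symm)
            have : i ≤ b ⊓ d := le_inf (lem_ge b hb') (lem_ge d hd')
            exact absurd (h ▸ this : i ≤ m) (hmi'.not_ge)
  have hra0 : ∀ u v : α, a0 u v → r u v := by
    intro u v h
    obtain ⟨h1, h2⟩ := haM u v h
    exact Or.inr ⟨h1, h2, h⟩
  intro x y hx hy
  constructor
  · intro h
    rcases h r hrcon hra0 with ⟨h1, _⟩ | ⟨_, _, h3⟩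
    · exact absurd h1 hx
    · exact h3
  · intro h
    exact βa0 x y h
end

section
/- (Tab Lemma, second case) Let L be a finite lattice, let m be a doubly irreducible element in a covering multi-diamond [o,i] of L, and let K = L \ {m}. Let α be a congruence of K and let β be the congruence of L generated by α. If o ≡ i (mod β), then the restriction of β to K equals α ∨ con_K(o,i), the join in the congruence lattice of K of α with the principal congruence of K generated by the pair (o,i). -/
variable {α : Type*}

section Aux

attribute [local instance] Classical.propDecidable

variable [Lattice α] [Fintype α] {o m i : α}

lemma le_o_of_lt_m (hm : DoublyIrred o m i) {z : α} (hz : z < m) : z ≤ o := by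
  obtain ⟨w, hzw, hwm⟩ := exists_le_covBy_of_lt hz
  exact hzw.trans (hm.2.2.1 w hwm).le

lemma i_le_of_m_lt (hm : DoublyIrred o m i) {z : α} (hz : m < z) : i ≤ z := by
  obtain ⟨w, hwm, hwz⟩ := exists_covBy_le_of_lt hz
  exact (hm.2.2.2 w hwm) ▸ hwz

lemma sup_ne_m (hm : DoublyIrred o m i) {a c : α} (haa : a ≠ m) (hcc : c ≠ m) :
    a ⊔ c ≠ m := by
  intro h
  have ha : a ≤ o := le_o_of_lt_m hm (lt_of_le_of_ne (h ▸ le_sup_left) haa)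
  have hc : c ≤ o := le_o_of_lt_m hm (lt_of_le_of_ne (h ▸ le_sup_right) hcc)
  exact absurd (h ▸ sup_le ha hc) (not_le_of_gt hm.1.lt)

lemma inf_ne_m (hm : DoublyIrred o m i) {a c : α} (haa : a ≠ m) (hcc : c ≠ m) :
    a ⊓ c ≠ m := by
  intro h
  have ha : i ≤ a := i_le_of_m_lt hm (lt_of_le_of_ne (h ▸ inf_le_left) (Ne.symm haa))
  have hc : i ≤ c := i_le_of_m_lt hm (lt_of_le_of_ne (h ▸ inf_le_right) (Ne.symm hcc))
  exact absurd (h ▸ le_inf ha hc) (not_le_of_gt hm.2.1.lt)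

/-- The projection replacing `m` by `i`. -/
noncomputable def proj (m i : α) (u : α) : α := if u = m then i else u

lemma proj_ne_m (hm : DoublyIrred o m i) (u : α) : proj m i u ≠ m := by
  unfold proj; split
  · exact fun h => absurd h.symm (ne_of_lt hm.2.1.lt)
  · assumption

lemma proj_eq_of_ne {u : α} (h : u ≠ m) : proj m i u = u := if_neg h

lemma proj_m : proj m i m = i := if_pos rfl

lemma proj_sup_m (hm : DoublyIrred o m i) (c : α) :
    proj m i (m ⊔ c) = i ⊔ proj m i c := by
  by_cases hcc : c = m
  · subst hcc; simp [proj]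
  · rw [proj_eq_of_ne hcc]
    by_cases hcm : c ≤ m
    · rw [sup_eq_left.2 hcm, proj_m, eq_comm, sup_eq_left]
      exact hcm.trans hm.2.1.lt.le
    · have h1 : m < m ⊔ c :=
        lt_of_le_of_ne le_sup_left (fun h => hcm (sup_eq_left.1 h.symm))
      have h2 : i ≤ m ⊔ c := i_le_of_m_lt hm h1
      rw [proj_eq_of_ne (ne_of_gt h1)]
      exact le_antisymm (sup_le (hm.2.1.lt.le.trans le_sup_left) le_sup_right)
        (sup_le h2 le_sup_right)

lemma proj_sup (hm : DoublyIrred o m i) (a c : α) :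
    proj m i (a ⊔ c) = proj m i a ⊔ proj m i c := by
  by_cases haa : a = m
  · subst haa; rw [proj_m, proj_sup_m hm]
  · by_cases hcc : c = m
    · subst hcc
      rw [proj_m, sup_comm a c, proj_sup_m hm, sup_comm]
    · rw [proj_eq_of_ne haa, proj_eq_of_ne hcc,
        proj_eq_of_ne (sup_ne_m hm haa hcc)]

lemma proj_inf_m_rel (hm : DoublyIrred o m i) {r : α → α → Prop}
    (hr : IsConOn {x : α | x ≠ m} r) (hoi : r o i) (c : α) :
    r (proj m i (m ⊓ c)) (i ⊓ proj m i c) := by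
  have hi : (i : α) ∈ {x : α | x ≠ m} := Ne.symm (ne_of_lt hm.2.1.lt)
  by_cases hcc : c = m
  · subst hcc; simpa [proj] using hr.1 i hi
  · rw [proj_eq_of_ne hcc]
    by_cases hmc : m ≤ c
    · have hic : i ≤ c := i_le_of_m_lt hm (lt_of_le_of_ne hmc (Ne.symm hcc))
      rw [inf_eq_left.2 hmc, proj_m, inf_eq_left.2 hic]
      exact hr.1 i hi
    · have h1 : m ⊓ c < m :=
        lt_of_le_of_ne inf_le_left (fun h => hmc (inf_eq_left.1 h))
      have h2 : m ⊓ c = o ⊓ c :=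
        le_antisymm (le_inf (le_o_of_lt_m hm h1) inf_le_right)
          (inf_le_inf_right c hm.1.lt.le)
      rw [proj_eq_of_ne (ne_of_lt h1), h2]
      exact (hr.2.2.2.2 o i c c hoi (hr.1 c hcc)).2

lemma proj_inf_rel (hm : DoublyIrred o m i) {r : α → α → Prop}
    (hr : IsConOn {x : α | x ≠ m} r) (hoi : r o i) (a c : α) :
    r (proj m i (a ⊓ c)) (proj m i a ⊓ proj m i c) := by
  by_cases haa : a = m
  · subst haa; rw [proj_m]; exact proj_inf_m_rel hm hr hoi c
  · by_cases hcc : c = m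
    · rw [hcc, proj_m, inf_comm a m, inf_comm (proj m i a) i]
      exact proj_inf_m_rel hm hr hoi a
    · rw [proj_eq_of_ne haa, proj_eq_of_ne hcc,
        proj_eq_of_ne (inf_ne_m hm haa hcc)]
      exact hr.1 _ (inf_ne_m hm haa hcc)

end Aux

theorem stmt_7 [Lattice α] [Fintype α] (o m i : α)
    (hd : IsMultiDiamond o i) (hm : DoublyIrred o m i)
    (a0 : α → α → Prop) (ha : IsConOn {x : α | x ≠ m} a0)
    (hcol : latConGen a0 o i) :
    ∀ x y : α, x ≠ m → y ≠ m →
      (latConGen a0 x y ↔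
        ∀ r : α → α → Prop, IsConOn {x : α | x ≠ m} r →
          (∀ u v : α, a0 u v → r u v) → r o i → r x y) := by
  intro x y hx hy
  have hine : (i : α) ≠ m := Ne.symm (ne_of_lt hm.2.1.lt)
  have hone : (o : α) ≠ m := ne_of_lt hm.1.lt
  constructor
  · -- forward: extend r along proj
    intro h r hr hcont hoi
    set s : α → α → Prop := fun u v => r (proj m i u) (proj m i v) with hs
    have hse : IsLatCon s := by
      refine ⟨⟨fun u => hr.1 _ (proj_ne_m hm u), fun h => hr.2.1 _ _ h,
        fun h h' => hr.2.2.1 _ _ _ h h'⟩, ?_⟩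
      intro a b c d hab hcd
      constructor
      · rw [hs]; dsimp only
        rw [proj_sup hm, proj_sup hm]
        exact (hr.2.2.2.2 _ _ _ _ hab hcd).1
      · rw [hs]; dsimp only
        refine hr.2.2.1 _ _ _ (proj_inf_rel hm hr hoi a c) ?_
        refine hr.2.2.1 _ _ _ (hr.2.2.2.2 _ _ _ _ hab hcd).2 ?_
        exact hr.2.1 _ _ (proj_inf_rel hm hr hoi b d)
    have hsub : ∀ u v : α, a0 u v → s u v := by
      intro u v huv
      obtain ⟨hu, hv⟩ := ha.2.2.2.1 u v huv
      rw [hs]; dsimp only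
      rw [proj_eq_of_ne hu, proj_eq_of_ne hv]
      exact hcont u v huv
    have := h s hse hsub
    rwa [hs, proj_eq_of_ne hx, proj_eq_of_ne hy] at this
  · -- backward: restrict a lattice congruence to K
    intro h s hse hsub
    set r : α → α → Prop := fun u v => s u v ∧ u ≠ m ∧ v ≠ m with hrdef
    have hr : IsConOn {x : α | x ≠ m} r := by
      refine ⟨fun u hu => ⟨hse.1.refl u, hu, hu⟩,
        fun u v huv => ⟨hse.1.symm huv.1, huv.2.2, huv.2.1⟩,
        fun u v w huv hvw => ⟨hse.1.trans huv.1 hvw.1, huv.2.1, hvw.2.2⟩,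
        fun u v huv => ⟨huv.2.1, huv.2.2⟩, ?_⟩
      intro a b c d hab hcd
      obtain ⟨h1, h2⟩ := hse.2 a b c d hab.1 hcd.1
      exact ⟨⟨h1, sup_ne_m hm hab.2.1 hcd.2.1, sup_ne_m hm hab.2.2 hcd.2.2⟩,
        ⟨h2, inf_ne_m hm hab.2.1 hcd.2.1, inf_ne_m hm hab.2.2 hcd.2.2⟩⟩
    have hcont : ∀ u v : α, a0 u v → r u v := by
      intro u v huv
      obtain ⟨hu, hv⟩ := ha.2.2.2.1 u v huv
      exact ⟨hsub u v huv, hu, hv⟩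
    have hoi : r o i := ⟨hcol s hse hsub, hone, hine⟩
    exact (h r hr hcont hoi).1
end

section
/- (Prime-Projectivity Lemma) Let L be a finite lattice and let p and q be distinct prime intervals in L. Then q is collapsed by con(p) if and only if there exists a sequence of prime intervals p = r_0, r_1, ..., r_n = q such that for each k, r_k is prime-perspective up or prime-perspective down to r_{k+1}. -/
variable {α : Type*}

/-- Prime-perspective down. -/
def PPDown [Lattice α] (p q : α × α) : Prop := p.1 ⊔ q.2 = p.2 ∧ p.1 ⊓ q.2 ≤ q.1

/-- Prime-perspective up. -/
def PPUp [Lattice α] (p q : α × α) : Prop := p.2 ⊓ q.1 = p.1 ∧ q.2 ≤ p.2 ⊔ q.1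

section Aux

variable [Lattice α] [Fintype α]

/-- pp-reachability by a chain of prime intervals. -/
def SR (p q : α × α) : Prop :=
  ∃ (n : ℕ) (r : ℕ → α × α), r 0 = p ∧ r n = q ∧
    (∀ k ≤ n, (r k).1 ⋖ (r k).2) ∧
    ∀ k < n, PPDown (r k) (r (k+1)) ∨ PPUp (r k) (r (k+1))

/-- every prime subinterval of `[c,d]` is reachable from `p`. -/
def GoodI (p : α × α) (c d : α) : Prop :=
  ∀ u v : α, c ≤ u → u ⋖ v → v ≤ d → SR p (u, v)

lemma sr_refl {p : α × α} (hp : p.1 ⋖ p.2) : SR p p :=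
  ⟨0, fun _ => p, rfl, rfl, fun _ _ => hp, fun k hk => absurd hk (Nat.not_lt_zero k)⟩

lemma sr_step {p q q' : α × α} (h : SR p q) (hstep : PPDown q q' ∨ PPUp q q')
    (hq' : q'.1 ⋖ q'.2) : SR p q' := by
  obtain ⟨n, r, h0, hn, hpr, hst⟩ := h
  refine ⟨n + 1, fun k => if k ≤ n then r k else q', ?_, ?_, ?_, ?_⟩
  · simp [h0]
  · simp
  · intro k hk
    by_cases hkn : k ≤ n
    · simpa [hkn] using hpr k hkn
    · simpa [hkn] using hq'
  · intro k hk
    rcases Nat.lt_or_ge k n with hlt | hge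
    · have h1 : k ≤ n := hlt.le
      have h2 : k + 1 ≤ n := hlt
      simpa [h1, h2] using hst k hlt
    · have hkeq : k = n := le_antisymm (Nat.lt_succ_iff.mp hk) hge
      subst hkeq
      simpa [hn] using hstep

lemma good_mono {p : α × α} {c d c' d' : α} (h : GoodI p c d) (hc : c ≤ c') (hd : d' ≤ d) :
    GoodI p c' d' := fun u v hu huv hv => h u v (hc.trans hu) huv (hv.trans hd)

lemma good_refl {p : α × α} (e : α) : GoodI p e e := by
  intro u v hu huv hv
  exact absurd (huv.lt.trans_le (hv.trans hu)) (lt_irrefl u)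

lemma exists_covby_le {a b : α} (h : a < b) : ∃ t, a ⋖ t ∧ t ≤ b := by
  obtain ⟨t, ⟨hat, htb⟩, hmin⟩ := wellFounded_lt.has_min {e | a < e ∧ e ≤ b} ⟨b, h, le_rfl⟩
  exact ⟨t, ⟨hat, fun c hc1 hc2 => hmin c ⟨hc1, hc2.le.trans htb⟩ hc2⟩, htb⟩

lemma exists_le_covby {a b : α} (h : a < b) : ∃ t, a ≤ t ∧ t ⋖ b := by
  obtain ⟨t, ⟨hat, htb⟩, hmax⟩ := wellFounded_gt.has_min {e | a ≤ e ∧ e < b} ⟨a, le_rfl, h⟩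
  exact ⟨t, hat, htb, fun c hc1 hc2 => hmax c ⟨hat.trans hc1.le, hc2⟩ hc1⟩

/-- Sub-lemma: if `v ⊓ c = u` for prime `(u,v)`, there is a prime interval in `[c, v ⊔ c]`
prime-perspective down to `(u,v)`. -/
lemma sub2 {u v c : α} (huv : u ⋖ v) (hc : v ⊓ c = u) :
    ∃ u' v', u' ⋖ v' ∧ c ≤ u' ∧ v' ≤ v ⊔ c ∧ PPDown (u', v') (u, v) := by
  obtain ⟨u', ⟨hcu', hu'vc, hu'v⟩, hmax⟩ := wellFounded_gt.has_min
      {t | c ≤ t ∧ t ≤ v ⊔ c ∧ t ⊓ v = u}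
      ⟨c, le_rfl, le_sup_right, by rwa [inf_comm]⟩
  have hu'lt : u' < v ⊔ c := by
    rcases lt_or_eq_of_le hu'vc with h | h
    · exact h
    · exfalso
      rw [h, inf_eq_right.mpr (le_sup_left : v ≤ v ⊔ c)] at hu'v
      exact absurd hu'v.symm huv.lt.ne
  obtain ⟨v', hcov, hv'le⟩ := exists_covby_le hu'lt
  have hv'notin : ¬ (v' ⊓ v = u) := fun h =>
    hmax v' ⟨hcu'.trans hcov.lt.le, hv'le, h⟩ hcov.lt
  have hvv' : v ≤ v' := by
    have h1 : u ≤ v' ⊓ v := by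
      rw [← hu'v]; exact inf_le_inf_right v hcov.lt.le
    rcases huv.eq_or_eq h1 inf_le_right with h | h
    · exact absurd h hv'notin
    · exact inf_eq_right.mp h
  have hsup : u' ⊔ v = v' := by
    have h1 : u' < u' ⊔ v := by
      rcases lt_or_eq_of_le (le_sup_left : u' ≤ u' ⊔ v) with h | h
      · exact h
      · exfalso
        have : v ≤ u' := le_sup_right.trans h.symm.le
        rw [inf_eq_right.mpr this] at hu'v
        exact huv.lt.ne' hu'v
    rcases hcov.eq_or_eq (le_of_lt h1) (sup_le hcov.lt.le hvv') with h | h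
    · exact absurd h.symm h1.ne
    · exact h
  exact ⟨u', v', hcov, hcu', hv'le, hsup, hu'v.le⟩

/-- Crux 2: prime `(u,v)` up-transposes (with equality at bottom) into a Good interval. -/
lemma crux2 {p : α × α} {u v A B : α} (huv : u ⋖ v) (hA : v ⊓ A = u) (hB : v ⊔ A ≤ B)
    (hG : GoodI p A B) : SR p (u, v) := by
  obtain ⟨u', v', hcov, hcu', hle, hpp⟩ := sub2 huv hA
  have h1 : SR p (u', v') := hG u' v' hcu' hcov (hle.trans hB)
  exact sr_step h1 (Or.inl hpp) huv

/-- Crux 2': prime `(u,v)` with `v ≤ u ⊔ Y` and `GoodI p X Y`, `X ≤ u`, `X ≤ Y`. -/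
lemma crux2' {p : α × α} {u v X Y : α} (huv : u ⋖ v) (hY : v ≤ u ⊔ Y)
    (hXu : X ≤ u) (hXY : X ≤ Y) (hG : GoodI p X Y) : SR p (u, v) := by
  obtain ⟨v'', ⟨h1v, h2v, h3v⟩, hmin⟩ := wellFounded_lt.has_min
      {t | u ⊓ Y ≤ t ∧ t ≤ Y ∧ v ≤ u ⊔ t} ⟨Y, inf_le_right, le_rfl, hY⟩
  have hlt : u ⊓ Y < v'' := by
    rcases lt_or_eq_of_le h1v with h | h
    · exact h
    · exfalso
      rw [← h, sup_inf_self] at h3v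
      exact huv.lt.not_ge h3v
  obtain ⟨u'', h1u, hcov⟩ := exists_le_covby hlt
  have hnot : ¬ v ≤ u ⊔ u'' := fun h =>
    hmin u'' ⟨h1u, hcov.lt.le.trans h2v, h⟩ hcov.lt
  have hS1 : SR p (u'', v'') := hG u'' v'' ((le_inf hXu hXY).trans h1u) hcov h2v
  set A := u ⊔ u'' with hAdef
  set B := u ⊔ v'' with hBdef
  have hvA : v'' ⊓ A = u'' := by
    have hge : u'' ≤ v'' ⊓ A := le_inf hcov.lt.le le_sup_right
    rcases hcov.eq_or_eq hge inf_le_left with h | h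
    · exact h
    · exfalso
      have : v'' ≤ A := le_of_inf_eq h
      exact hnot (h3v.trans (sup_le le_sup_left (this.trans le_rfl)))
  have hGood : GoodI p A B := by
    intro s t hs hst ht
    have hvs : v'' ⊓ s = u'' := by
      have hge : u'' ≤ v'' ⊓ s := le_inf hcov.lt.le ((le_sup_right.trans hs))
      rcases hcov.eq_or_eq hge inf_le_left with h | h
      · exact h
      · exfalso
        have hv''s : v'' ≤ s := le_of_inf_eq h
        have : B ≤ s := sup_le (le_sup_left.trans hs) hv''s
        exact hst.lt.not_ge (ht.trans this)
    have hts : t ≤ v'' ⊔ s :=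
      ht.trans (sup_le (((le_sup_left : u ≤ u ⊔ u'').trans hs).trans le_sup_right) le_sup_left)
    exact sr_step hS1 (Or.inr ⟨hvs, hts⟩) hst
  have hvA' : v ⊓ A = u := by
    have hge : u ≤ v ⊓ A := le_inf huv.lt.le le_sup_left
    rcases huv.eq_or_eq hge inf_le_left with h | h
    · exact h
    · exact absurd (le_of_inf_eq h) hnot
  have hvB : v ⊔ A ≤ B :=
    sup_le h3v (sup_le le_sup_left (hcov.lt.le.trans le_sup_right))
  exact crux2 huv hvA' hvB hGood

/-- Gluing adjacent Good intervals. -/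
lemma good_trans {p : α × α} {x y z : α} (hxy : x ≤ y) (hyz : y ≤ z)
    (G1 : GoodI p x y) (G2 : GoodI p y z) : GoodI p x z := by
  intro u v hu huv hv
  by_cases h : v ≤ u ⊔ y
  · exact crux2' huv h hu hxy G1
  · have hA : v ⊓ (u ⊔ y) = u := by
      have hge : u ≤ v ⊓ (u ⊔ y) := le_inf huv.lt.le le_sup_left
      rcases huv.eq_or_eq hge inf_le_left with h' | h'
      · exact h'
      · exact absurd (le_of_inf_eq h') h
    have hB : v ⊔ (u ⊔ y) ≤ z := sup_le hv (sup_le (huv.lt.le.trans hv) hyz)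
    exact crux2 huv hA hB (good_mono G2 le_sup_right le_rfl)

/-- A reachable prime interval joined with anything gives a Good interval. -/
lemma cov_sup {p : α × α} {a b : α} (hab : a ⋖ b) (hS : SR p (a, b)) (c : α) :
    GoodI p (a ⊔ c) (b ⊔ c) := by
  intro x y hx hxy hy
  have hbx : b ⊓ x = a := by
    have hge : a ≤ b ⊓ x := le_inf hab.lt.le ((le_sup_left : a ≤ a ⊔ c).trans hx)
    rcases hab.eq_or_eq hge inf_le_left with h | h
    · exact h
    · exfalso
      have hbx' : b ≤ x := le_of_inf_eq h
      have : y ≤ x := hy.trans (sup_le hbx' ((le_sup_right : c ≤ a ⊔ c).trans hx))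
      exact hxy.lt.not_ge this
  have hyle : y ≤ b ⊔ x := hy.trans (sup_le le_sup_left (((le_sup_right : c ≤ a ⊔ c).trans hx).trans le_sup_right))
  exact sr_step hS (Or.inr ⟨hbx, hyle⟩) hxy

/-- Dual: a reachable prime interval met with anything gives a Good interval. -/
lemma cov_inf {p : α × α} {a b : α} (hab : a ⋖ b) (hS : SR p (a, b)) (c : α) :
    GoodI p (a ⊓ c) (b ⊓ c) := by
  intro x y hx hxy hy
  have hay : a ⊔ y = b := by
    have hle : a ⊔ y ≤ b := sup_le hab.lt.le (hy.trans inf_le_left)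
    rcases hab.eq_or_eq le_sup_left hle with h | h
    · exfalso
      have hya : y ≤ a := le_sup_right.trans h.le
      have : y ≤ x := (le_inf hya (hy.trans inf_le_right)).trans hx
      exact hxy.lt.not_ge this
    · exact h
  have hinf : a ⊓ y ≤ x := (le_inf inf_le_left ((inf_le_right.trans hy).trans inf_le_right)).trans hx
  exact sr_step hS (Or.inl ⟨hay, hinf⟩) hxy

/-- Join-compatibility of Good intervals (via maximal chains), by strong induction on
the cardinality of the interval. -/
lemma sup_full_aux {p : α × α} : ∀ N : ℕ, ∀ m j : α, (Set.Icc m j).ncard ≤ N → m ≤ j →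
    GoodI p m j → ∀ c : α, GoodI p (m ⊔ c) (j ⊔ c) := by
  intro N
  induction N with
  | zero =>
    intro m j hcard hmj _ c
    exfalso
    have h1 : 0 < (Set.Icc m j).ncard :=
      Set.Nonempty.ncard_pos (Set.toFinite _) ⟨m, le_rfl, hmj⟩
    omega
  | succ N ih =>
    intro m j hcard hmj G c
    rcases eq_or_lt_of_le hmj with h | h
    · subst h
      exact good_mono (good_refl (m ⊔ c)) le_rfl le_rfl
    · obtain ⟨t, hcov, htj⟩ := exists_covby_le h
      have hSt : SR p (m, t) := G m t le_rfl hcov htj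
      have G1 : GoodI p (m ⊔ c) (t ⊔ c) := cov_sup hcov hSt c
      have hsub : Set.Icc t j ⊆ Set.Icc m j := Set.Icc_subset_Icc hcov.lt.le le_rfl
      have hmem : m ∉ Set.Icc t j := fun hm => hcov.lt.not_ge hm.1
      have hlt : (Set.Icc t j).ncard < (Set.Icc m j).ncard := by
        apply Set.ncard_lt_ncard _ (Set.toFinite _)
        exact ⟨hsub, fun hsub' => hmem (hsub' ⟨le_rfl, hmj⟩)⟩
      have G2 : GoodI p (t ⊔ c) (j ⊔ c) :=
        ih t j (by omega) htj (good_mono G hcov.lt.le le_rfl) c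
      exact good_trans (sup_le_sup_right hcov.lt.le c) (sup_le_sup_right htj c) G1 G2

lemma sup_full {p : α × α} {m j : α} (hmj : m ≤ j) (G : GoodI p m j) (c : α) :
    GoodI p (m ⊔ c) (j ⊔ c) :=
  sup_full_aux (Set.Icc m j).ncard m j le_rfl hmj G c

lemma inf_full_aux {p : α × α} : ∀ N : ℕ, ∀ m j : α, (Set.Icc m j).ncard ≤ N → m ≤ j →
    GoodI p m j → ∀ c : α, GoodI p (m ⊓ c) (j ⊓ c) := by
  intro N
  induction N with
  | zero =>
    intro m j hcard hmj _ c
    exfalso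
    have h1 : 0 < (Set.Icc m j).ncard :=
      Set.Nonempty.ncard_pos (Set.toFinite _) ⟨m, le_rfl, hmj⟩
    omega
  | succ N ih =>
    intro m j hcard hmj G c
    rcases eq_or_lt_of_le hmj with h | h
    · subst h
      exact good_mono (good_refl (m ⊓ c)) le_rfl le_rfl
    · obtain ⟨t, htm, hcov⟩ := exists_le_covby h
      have hSt : SR p (t, j) := G t j htm hcov le_rfl
      have G2 : GoodI p (t ⊓ c) (j ⊓ c) := cov_inf hcov hSt c
      have hsub : Set.Icc m t ⊆ Set.Icc m j := Set.Icc_subset_Icc le_rfl hcov.lt.le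
      have hmem : j ∉ Set.Icc m t := fun hm => hcov.lt.not_ge hm.2
      have hlt : (Set.Icc m t).ncard < (Set.Icc m j).ncard := by
        apply Set.ncard_lt_ncard _ (Set.toFinite _)
        exact ⟨hsub, fun hsub' => hmem (hsub' ⟨hmj, le_rfl⟩)⟩
      have G1 : GoodI p (m ⊓ c) (t ⊓ c) :=
        ih m t (by omega) htm (good_mono G le_rfl hcov.lt.le) c
      exact good_trans (inf_le_inf_right c htm) (inf_le_inf_right c hcov.lt.le) G1 G2

lemma inf_full {p : α × α} {m j : α} (hmj : m ≤ j) (G : GoodI p m j) (c : α) :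
    GoodI p (m ⊓ c) (j ⊓ c) :=
  inf_full_aux (Set.Icc m j).ncard m j le_rfl hmj G c

/-- The candidate congruence. -/
def RCg (p : α × α) (a b : α) : Prop := GoodI p (a ⊓ b) (a ⊔ b)

lemma rcg_con (p : α × α) : IsLatCon (RCg p) := by
  have hsup1 : ∀ a b c : α, RCg p a b → RCg p (a ⊔ c) (b ⊔ c) := by
    intro a b c h
    have h1 : GoodI p ((a ⊓ b) ⊔ c) ((a ⊔ b) ⊔ c) := sup_full (inf_le_sup : a ⊓ b ≤ a ⊔ b) h c
    exact good_mono h1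
      (le_inf (sup_le_sup_right inf_le_left c) (sup_le_sup_right inf_le_right c))
      (sup_le (sup_le (le_sup_left.trans le_sup_left) le_sup_right)
        (sup_le (le_sup_right.trans le_sup_left) le_sup_right))
  have hinf1 : ∀ a b c : α, RCg p a b → RCg p (a ⊓ c) (b ⊓ c) := by
    intro a b c h
    have h1 : GoodI p ((a ⊓ b) ⊓ c) ((a ⊔ b) ⊓ c) := inf_full (inf_le_sup : a ⊓ b ≤ a ⊔ b) h c
    refine good_mono h1 ?_ ?_
    · exact le_inf (le_inf (inf_le_left.trans inf_le_left) inf_le_right)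
        (le_inf (inf_le_left.trans inf_le_right) inf_le_right)
    · exact le_inf (sup_le (inf_le_left.trans le_sup_left) (inf_le_left.trans le_sup_right))
        (sup_le inf_le_right inf_le_right)
  have hrefl : ∀ a : α, RCg p a a := by
    intro a
    unfold RCg
    rw [inf_idem, sup_idem]
    exact good_refl a
  have hsymm : ∀ {a b : α}, RCg p a b → RCg p b a := by
    intro a b h
    unfold RCg at *
    rwa [inf_comm, sup_comm] at h
  have htrans : ∀ {a b c : α}, RCg p a b → RCg p b c → RCg p a c := by
    intro a b c G1 G2
    have H1 : GoodI p (a ⊓ b ⊓ c) (a ⊓ b) := by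
      have := inf_full (inf_le_sup : b ⊓ c ≤ b ⊔ c) G2 (a ⊓ b)
      refine good_mono this ?_ ?_
      · exact le_inf (le_inf (inf_le_right.trans inf_le_left) (inf_le_right.trans inf_le_right))
          (inf_le_left.trans inf_le_right)
      · exact le_inf (inf_le_right.trans le_sup_left) le_rfl
    have H3 : GoodI p (a ⊔ b) (a ⊔ b ⊔ c) := by
      have := sup_full (inf_le_sup : b ⊓ c ≤ b ⊔ c) G2 (a ⊔ b)
      refine good_mono this ?_ ?_
      · exact sup_le (inf_le_left.trans le_sup_right) le_rfl
      · exact sup_le (sup_le (le_sup_left.trans le_sup_right) (le_sup_right.trans le_sup_right))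
          (le_sup_right.trans le_sup_left)
    have T12 : GoodI p (a ⊓ b ⊓ c) (a ⊔ b) :=
      good_trans inf_le_left inf_le_sup H1 G1
    have T : GoodI p (a ⊓ b ⊓ c) (a ⊔ b ⊔ c) :=
      good_trans (inf_le_left.trans inf_le_sup) le_sup_left T12 H3
    exact good_mono T
      (le_inf (inf_le_left.trans inf_le_left) inf_le_right)
      (sup_le (le_sup_left.trans le_sup_left) le_sup_right)
  refine ⟨⟨hrefl, hsymm, htrans⟩, ?_⟩
  intro a b c d hab hcd
  constructor
  · exact htrans (hsup1 a b c hab)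
      (by rw [sup_comm b c, sup_comm b d]; exact hsup1 c d b hcd)
  · exact htrans (hinf1 a b c hab)
      (by rw [inf_comm b c, inf_comm b d]; exact hinf1 c d b hcd)

lemma rcg_base {p : α × α} (hp : p.1 ⋖ p.2) : RCg p p.1 p.2 := by
  unfold RCg
  rw [inf_eq_left.mpr hp.lt.le, sup_eq_right.mpr hp.lt.le]
  intro u v hu huv hv
  have hu' : u = p.1 := by
    rcases hp.eq_or_eq hu (huv.lt.le.trans hv) with h | h
    · exact h
    · exfalso
      have h2 : p.2 < v := h ▸ huv.lt
      exact absurd hv (not_le_of_gt h2)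
  have hv' : v = p.2 := by
    rcases hp.eq_or_eq (hu.trans huv.lt.le) hv with h | h
    · exfalso
      have h2 : u < p.1 := h ▸ huv.lt
      exact absurd hu (not_le_of_gt h2)
    · exact h
  rw [hu', hv']
  exact sr_refl hp

end Aux
theorem stmt_9 [Lattice α] [Fintype α] (p q : α × α)
    (hp : p.1 ⋖ p.2) (hq : q.1 ⋖ q.2) (hne : p ≠ q) :
    latCg p.1 p.2 q.1 q.2 ↔
      ∃ (n : ℕ) (r : ℕ → α × α), r 0 = p ∧ r n = q ∧
        (∀ k ≤ n, (r k).1 ⋖ (r k).2) ∧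
        ∀ k < n, PPDown (r k) (r (k+1)) ∨ PPUp (r k) (r (k+1)) := by
  constructor
  · intro h
    have hR : RCg p q.1 q.2 := h (RCg p) (rcg_con p) (rcg_base hp)
    have hS : SR p (q.1, q.2) := hR q.1 q.2 inf_le_left hq le_sup_right
    rw [show ((q.1, q.2) : α × α) = q from rfl] at hS
    exact hS
  · rintro ⟨n, r, h0, hn, hpr, hst⟩ rel hcon hrel
    obtain ⟨heq, hcomp⟩ := hcon
    have key : ∀ k, k ≤ n → rel (r k).1 (r k).2 := by
      intro k
      induction k with
      | zero => intro _; rw [h0]; exact hrel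
      | succ k ih =>
        intro hk
        have hk' : k ≤ n := Nat.le_of_succ_le hk
        have hkn : k < n := hk
        have IH := ih hk'
        have hccd : (r (k+1)).1 ≤ (r (k+1)).2 := (hpr (k+1) hk).lt.le
        rcases hst k hkn with ⟨h1, h2⟩ | ⟨h1, h2⟩
        · -- PPDown
          have hm := (hcomp (r k).1 (r k).2 (r (k+1)).2 (r (k+1)).2 IH
            (heq.refl (r (k+1)).2)).2
          have hdb : (r (k+1)).2 ≤ (r k).2 := le_sup_right.trans h1.le
          rw [inf_eq_right.mpr hdb] at hm
          have hj := (hcomp _ _ (r (k+1)).1 (r (k+1)).1 hm (heq.refl (r (k+1)).1)).1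
          have e1 : (r k).1 ⊓ (r (k+1)).2 ⊔ (r (k+1)).1 = (r (k+1)).1 := sup_eq_right.mpr h2
          have e2 : (r (k+1)).2 ⊔ (r (k+1)).1 = (r (k+1)).2 := sup_eq_left.mpr hccd
          rw [e1, e2] at hj
          exact hj
        · -- PPUp
          have hj := (hcomp (r k).1 (r k).2 (r (k+1)).1 (r (k+1)).1 IH
            (heq.refl (r (k+1)).1)).1
          have e1 : (r k).1 ⊔ (r (k+1)).1 = (r (k+1)).1 :=
            sup_eq_right.mpr (h1 ▸ (inf_le_right : (r k).2 ⊓ (r (k+1)).1 ≤ (r (k+1)).1))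
          rw [e1] at hj
          have hm := (hcomp _ _ (r (k+1)).2 (r (k+1)).2 hj (heq.refl (r (k+1)).2)).2
          have e2 : (r (k+1)).1 ⊓ (r (k+1)).2 = (r (k+1)).1 := inf_eq_left.mpr hccd
          have e3 : ((r k).2 ⊔ (r (k+1)).1) ⊓ (r (k+1)).2 = (r (k+1)).2 := inf_eq_right.mpr h2
          rw [e2, e3] at hm
          exact hm
    have := key n le_rfl
    rwa [hn] at this
end

section
/- Let L be a finite lattice, let m be a doubly irreducible element in a covering multi-diamond [o,i], K = L \ {m}, and let p be a prime interval in K. Then o ≡ i (mod con_L(p)) if and only if there is a prime interval q in K with 0_q ≡ 1_q (mod con_K(p)) and either 1_q = i or 0_q = o. -/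
variable {α : Type*}

theorem stmt_10 [Lattice α] [Fintype α] (o m i : α)
    (hd : IsMultiDiamond o i) (hm : DoublyIrred o m i)
    (p : α × α) (hp : p.1 ⋖ p.2) (hpm : p.1 ≠ m ∧ p.2 ≠ m) :
    latCg p.1 p.2 o i ↔
      ∃ q : α × α, q.1 ⋖ q.2 ∧ q.1 ≠ m ∧ q.2 ≠ m ∧
        cgOn {x : α | x ≠ m} p.1 p.2 q.1 q.2 ∧ (q.2 = i ∨ q.1 = o) := by
  obtain ⟨hom, hmi, hlow, hupp⟩ := hm
  obtain ⟨hoi, hIcc, x, y, z, hx1, hx2, hy1, hy2, hz1, hz2, hxy, hxz, hyz⟩ := hd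
  -- choose two diamond atoms distinct from `m`
  obtain ⟨a, b, ha1, ha2, hb1, hb2, ham, hbm, hab⟩ :
      ∃ a b : α, o ⋖ a ∧ a ⋖ i ∧ o ⋖ b ∧ b ⋖ i ∧ a ≠ m ∧ b ≠ m ∧ a ≠ b := by
    by_cases hxm : x = m
    · exact ⟨y, z, hy1, hy2, hz1, hz2, fun h => hxy (hxm.trans h.symm),
        fun h => hxz (hxm.trans h.symm), hyz⟩
    · by_cases hym : y = m
      · exact ⟨x, z, hx1, hx2, hz1, hz2, hxm, fun h => hyz (hym.trans h.symm), hxz⟩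
      · exact ⟨x, y, hx1, hx2, hy1, hy2, hxm, hym, hxy⟩
  have hom' : o ≠ m := hom.lt.ne
  have him : i ≠ m := hmi.lt.ne'
  have hlt_le : ∀ w : α, w < m → w ≤ o := by
    intro w hw
    obtain ⟨c, hwc, hcm⟩ := hw.exists_le_covby
    exact hwc.trans (hlow c hcm).le
  have hle_gt : ∀ w : α, m < w → i ≤ w := by
    intro w hw
    obtain ⟨c, hmc, hcw⟩ := hw.exists_covby_le
    exact (hupp c hmc) ▸ hcw
  have hjoinm : ∀ u v : α, u ≠ m → v ≠ m → u ⊔ v ≠ m := by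
    intro u v hu hv h
    have hu' : u ≤ o := hlt_le u (lt_of_le_of_ne (le_sup_left.trans_eq h) hu)
    have hv' : v ≤ o := hlt_le v (lt_of_le_of_ne (le_sup_right.trans_eq h) hv)
    exact hom.lt.not_ge (h ▸ sup_le hu' hv')
  have hmeetm : ∀ u v : α, u ≠ m → v ≠ m → u ⊓ v ≠ m := by
    intro u v hu hv h
    have hu' : i ≤ u := hle_gt u (lt_of_le_of_ne (h ▸ inf_le_left) (Ne.symm hu))
    have hv' : i ≤ v := hle_gt v (lt_of_le_of_ne (h ▸ inf_le_right) (Ne.symm hv))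
    exact hmi.lt.not_ge (h ▸ le_inf hu' hv')
  have hatom_sup : ∀ c : α, o ⋖ c → c ⋖ i → c ≠ m → m ⊔ c = i := by
    intro c hc1 hc2 hcm
    rcases hmi.eq_or_eq le_sup_left (sup_le hmi.le hc2.le) with h | h
    · exact absurd (hlt_le c (lt_of_le_of_ne (le_sup_right.trans_eq h) hcm)) hc1.lt.not_ge
    · exact h
  have hatom_inf : ∀ c : α, o ⋖ c → c ⋖ i → c ≠ m → m ⊓ c = o := by
    intro c hc1 hc2 hcm
    rcases hc1.eq_or_eq (le_inf hom.le hc1.le) inf_le_right with h | h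
    · exact h
    · have hcm' : c ≤ m := h ▸ inf_le_left
      exact absurd (hlt_le c (lt_of_le_of_ne hcm' hcm)) hc1.lt.not_ge
  have hab_sup : a ⊔ b = i := by
    rcases ha2.eq_or_eq le_sup_left (sup_le ha2.le hb2.le) with h | h
    · have hba : b ≤ a := le_sup_right.trans_eq h
      rcases ha1.eq_or_eq hb1.le hba with h' | h'
      · exact absurd h' hb1.lt.ne'
      · exact absurd h' hab.symm
    · exact h
  have hab_inf : a ⊓ b = o := by
    rcases ha1.eq_or_eq (le_inf ha1.le hb1.le) inf_le_left with h | h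
    · exact h
    · have hba : a ≤ b := h ▸ inf_le_right
      rcases hb1.eq_or_eq ha1.le hba with h' | h'
      · exact absurd h' ha1.lt.ne'
      · exact absurd h' hab
  -- Lemma A : collapsing a prime interval with top `i` forces collapsing `(o,i)`
  have lemA : ∀ r : α → α → Prop, IsLatCon r → ∀ w : α, w ⋖ i → w ≠ m → r w i → r o i := by
    intro r hr w hw hwm hrw
    obtain ⟨⟨hrefl, hsymm, htrans⟩, hcompat⟩ := hr
    have hwmo : w ⊓ m ≤ o := by
      apply hlt_le
      refine lt_of_le_of_ne inf_le_right fun e => ?_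
      have hmw : m ≤ w := e ▸ inf_le_left
      rcases hmw.lt_or_eq with h | h
      · exact hw.lt.not_ge (hle_gt w h)
      · exact hwm h.symm
    have s1 : r (w ⊓ m) m := by
      have h0 := (hcompat w i m m hrw (hrefl m)).2
      rwa [inf_eq_right.mpr hmi.le] at h0
    have s2 : r o m := by
      have h0 := (hcompat _ _ o o s1 (hrefl o)).1
      rwa [sup_eq_right.mpr hwmo, sup_eq_left.mpr hom.le] at h0
    have s3 : r a i := by
      have h0 := (hcompat o m a a s2 (hrefl a)).1
      rwa [sup_eq_right.mpr ha1.le, hatom_sup a ha1 ha2 ham] at h0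
    have s4 : r b i := by
      have h0 := (hcompat o m b b s2 (hrefl b)).1
      rwa [sup_eq_right.mpr hb1.le, hatom_sup b hb1 hb2 hbm] at h0
    have s5 : r o b := by
      have h0 := (hcompat a i b b s3 (hrefl b)).2
      rwa [hab_inf, inf_eq_right.mpr hb2.le] at h0
    exact htrans s5 s4
  -- Lemma B : collapsing a prime interval with bottom `o` forces collapsing `(o,i)`
  have lemB : ∀ r : α → α → Prop, IsLatCon r → ∀ w : α, o ⋖ w → w ≠ m → r o w → r o i := by
    intro r hr w hw hwm hrw
    obtain ⟨⟨hrefl, hsymm, htrans⟩, hcompat⟩ := hr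
    have hiw : i ≤ w ⊔ m := by
      apply hle_gt
      refine lt_of_le_of_ne le_sup_right fun e => ?_
      have hwm' : w ≤ m := le_sup_left.trans e.symm.le
      exact hw.lt.not_ge (hlt_le w (lt_of_le_of_ne hwm' hwm))
    have s1 : r m (w ⊔ m) := by
      have h0 := (hcompat o w m m hrw (hrefl m)).1
      rwa [sup_eq_right.mpr hom.le] at h0
    have s2 : r m i := by
      have h0 := (hcompat _ _ i i s1 (hrefl i)).2
      rwa [inf_eq_left.mpr hmi.le, inf_eq_right.mpr hiw] at h0
    have s3 : r o a := by
      have h0 := (hcompat m i a a s2 (hrefl a)).2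
      rwa [hatom_inf a ha1 ha2 ham, inf_eq_right.mpr ha2.le] at h0
    have s4 : r o b := by
      have h0 := (hcompat m i b b s2 (hrefl b)).2
      rwa [hatom_inf b hb1 hb2 hbm, inf_eq_right.mpr hb2.le] at h0
    have s5 := (hcompat o a o b s3 s4).1
    rwa [sup_idem, hab_sup] at s5
  constructor
  · -- forward direction
    intro hL
    by_contra hno
    push_neg at hno
    set K : Set α := {x : α | x ≠ m} with hK
    set Θ : α → α → Prop := fun u v => cgOn K p.1 p.2 u v with hΘdef
    have hΘp : Θ p.1 p.2 := fun r hr hrp => hrp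
    have hΘmem : ∀ u v, Θ u v → u ≠ m ∧ v ≠ m := by
      intro u v h
      refine h (fun s t => s ≠ m ∧ t ≠ m) ?_ ⟨hpm.1, hpm.2⟩
      exact ⟨fun s hs => ⟨hs, hs⟩, fun s t h => ⟨h.2, h.1⟩,
        fun s t u h1 h2 => ⟨h1.1, h2.2⟩, fun s t h => ⟨h.1, h.2⟩,
        fun a' b' c' d' h1 h2 =>
          ⟨⟨hjoinm _ _ h1.1 h2.1, hjoinm _ _ h1.2 h2.2⟩,
           hmeetm _ _ h1.1 h2.1, hmeetm _ _ h1.2 h2.2⟩⟩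
    have hΘrefl : ∀ u, u ≠ m → Θ u u := fun u hu r hr hrp => hr.1 u hu
    have hΘsymm : ∀ u v, Θ u v → Θ v u := fun u v h r hr hrp => hr.2.1 _ _ (h r hr hrp)
    have hΘtrans : ∀ u v w, Θ u v → Θ v w → Θ u w :=
      fun u v w h1 h2 r hr hrp => hr.2.2.1 _ _ _ (h1 r hr hrp) (h2 r hr hrp)
    have hΘcompat : ∀ u v c d, Θ u v → Θ c d → Θ (u ⊔ c) (v ⊔ d) ∧ Θ (u ⊓ c) (v ⊓ d) :=
      fun u v c d h1 h2 =>
        ⟨fun r hr hrp => (hr.2.2.2.2 _ _ _ _ (h1 r hr hrp) (h2 r hr hrp)).1,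
         fun r hr hrp => (hr.2.2.2.2 _ _ _ _ (h1 r hr hrp) (h2 r hr hrp)).2⟩
    have claim1 : ∀ w, w ≠ m → o < w → ¬ Θ o w := by
      intro w hwm how hΘow
      obtain ⟨u, hou, huw, hum⟩ : ∃ u, o ⋖ u ∧ u ≤ w ∧ u ≠ m := by
        by_cases hmw : m ≤ w
        · exact ⟨a, ha1, ha2.le.trans (hle_gt w (lt_of_le_of_ne hmw (fun e => hwm e.symm))), ham⟩
        · obtain ⟨u, hou, huw⟩ := how.exists_covby_le
          exact ⟨u, hou, huw, fun e => hmw (e ▸ huw)⟩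
      have hΘou : Θ o u := by
        have h0 := (hΘcompat o w u u hΘow (hΘrefl u hum)).2
        rwa [inf_eq_left.mpr hou.le, inf_eq_right.mpr huw] at h0
      exact (hno (o, u) hou hom' hum hΘou).2 rfl
    have claim2 : ∀ w, w ≠ m → w < i → ¬ Θ w i := by
      intro w hwm hwi hΘwi
      obtain ⟨u, hwu, hui, hum⟩ : ∃ u, w ≤ u ∧ u ⋖ i ∧ u ≠ m := by
        by_cases hwo : w ≤ o
        · exact ⟨a, hwo.trans ha1.le, ha2, ham⟩
        · obtain ⟨u, hwu, hui⟩ := hwi.exists_le_covby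
          exact ⟨u, hwu, hui, fun e => hwo (hlt_le w (lt_of_le_of_ne (e ▸ hwu) hwm))⟩
      have hΘui : Θ u i := by
        have h0 := (hΘcompat w i u u hΘwi (hΘrefl u hum)).1
        rwa [sup_eq_right.mpr hwu, sup_eq_left.mpr hui.le] at h0
      exact (hno (u, i) hui hum him hΘui).1 rfl
    -- mixing Θ with an arbitrary element (possibly m)
    have hmix : ∀ u v c : α, Θ u v →
        (u ⊔ c = v ⊔ c ∨ Θ (u ⊔ c) (v ⊔ c)) ∧ (u ⊓ c = v ⊓ c ∨ Θ (u ⊓ c) (v ⊓ c)) := by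
      intro u v c huv
      by_cases hcm : c = m
      · rw [hcm]
        obtain ⟨hum, hvm⟩ := hΘmem u v huv
        constructor
        · by_cases huo : u ≤ o
          · by_cases hvo : v ≤ o
            · left
              rw [sup_eq_right.mpr (huo.trans hom.le), sup_eq_right.mpr (hvo.trans hom.le)]
            · exfalso
              have h1 : Θ o (v ⊔ o) := by
                have h0 := (hΘcompat u v o o huv (hΘrefl o hom')).1
                rwa [sup_eq_right.mpr huo] at h0
              exact claim1 (v ⊔ o) (hjoinm v o hvm hom')
                (lt_of_le_of_ne le_sup_right (fun e => hvo (le_sup_left.trans e.symm.le))) h1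
          · by_cases hvo : v ≤ o
            · exfalso
              have h1 : Θ o (u ⊔ o) := by
                have h0 := (hΘcompat v u o o (hΘsymm u v huv) (hΘrefl o hom')).1
                rwa [sup_eq_right.mpr hvo] at h0
              exact claim1 (u ⊔ o) (hjoinm u o hum hom')
                (lt_of_le_of_ne le_sup_right (fun e => huo (le_sup_left.trans e.symm.le))) h1
            · right
              have hui : u ⊔ m = u ⊔ i := by
                have h1 : i ≤ u ⊔ m := hle_gt _ (lt_of_le_of_ne le_sup_right
                  (fun e => huo (hlt_le u (lt_of_le_of_ne (le_sup_left.trans e.symm.le) hum))))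
                exact le_antisymm (sup_le_sup_left hmi.le u) (sup_le le_sup_left h1)
              have hvi : v ⊔ m = v ⊔ i := by
                have h1 : i ≤ v ⊔ m := hle_gt _ (lt_of_le_of_ne le_sup_right
                  (fun e => hvo (hlt_le v (lt_of_le_of_ne (le_sup_left.trans e.symm.le) hvm))))
                exact le_antisymm (sup_le_sup_left hmi.le v) (sup_le le_sup_left h1)
              rw [hui, hvi]
              exact (hΘcompat u v i i huv (hΘrefl i him)).1
        · by_cases hiu : i ≤ u
          · by_cases hiv : i ≤ v
            · left
              rw [inf_eq_right.mpr (hmi.le.trans hiu), inf_eq_right.mpr (hmi.le.trans hiv)]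
            · exfalso
              have h1 : Θ (v ⊓ i) i := by
                have h0 := (hΘcompat v u i i (hΘsymm u v huv) (hΘrefl i him)).2
                rwa [inf_eq_right.mpr hiu] at h0
              exact claim2 (v ⊓ i) (hmeetm v i hvm him)
                (lt_of_le_of_ne inf_le_right (fun e => hiv (e ▸ inf_le_left))) h1
          · by_cases hiv : i ≤ v
            · exfalso
              have h1 : Θ (u ⊓ i) i := by
                have h0 := (hΘcompat u v i i huv (hΘrefl i him)).2
                rwa [inf_eq_right.mpr hiv] at h0
              exact claim2 (u ⊓ i) (hmeetm u i hum him)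
                (lt_of_le_of_ne inf_le_right (fun e => hiu (e ▸ inf_le_left))) h1
            · right
              have hum' : u ⊓ m = u ⊓ o := by
                have h1 : u ⊓ m ≤ o := hlt_le _ (lt_of_le_of_ne inf_le_right
                  (fun e => hiu (hle_gt u (lt_of_le_of_ne (e ▸ inf_le_left) (Ne.symm hum)))))
                exact le_antisymm (le_inf inf_le_left h1) (inf_le_inf_left u hom.le)
              have hvm' : v ⊓ m = v ⊓ o := by
                have h1 : v ⊓ m ≤ o := hlt_le _ (lt_of_le_of_ne inf_le_right
                  (fun e => hiv (hle_gt v (lt_of_le_of_ne (e ▸ inf_le_left) (Ne.symm hvm)))))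
                exact le_antisymm (le_inf inf_le_left h1) (inf_le_inf_left v hom.le)
              rw [hum', hvm']
              exact (hΘcompat u v o o huv (hΘrefl o hom')).2
      · exact ⟨Or.inr (hΘcompat u v c c huv (hΘrefl c hcm)).1,
          Or.inr (hΘcompat u v c c huv (hΘrefl c hcm)).2⟩
    have hrcon : IsLatCon (fun u v : α => u = v ∨ Θ u v) := by
      refine ⟨⟨fun u => Or.inl rfl, ?_, ?_⟩, ?_⟩
      · rintro u v (rfl | h)
        · exact Or.inl rfl
        · exact Or.inr (hΘsymm _ _ h)
      · rintro u v w (rfl | h1) h2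
        · exact h2
        · rcases h2 with rfl | h2
          · exact Or.inr h1
          · exact Or.inr (hΘtrans _ _ _ h1 h2)
      · rintro u v c d (rfl | h1) (rfl | h2)
        · exact ⟨Or.inl rfl, Or.inl rfl⟩
        · have hmx := hmix c d u h2
          constructor
          · rcases hmx.1 with h | h
            · exact Or.inl (by rw [sup_comm u c, sup_comm u d, h])
            · exact Or.inr (by rw [sup_comm u c, sup_comm u d]; exact h)
          · rcases hmx.2 with h | h
            · exact Or.inl (by rw [inf_comm u c, inf_comm u d, h])
            · exact Or.inr (by rw [inf_comm u c, inf_comm u d]; exact h)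
        · exact hmix u v c h1
        · exact ⟨Or.inr (hΘcompat u v c d h1 h2).1, Or.inr (hΘcompat u v c d h1 h2).2⟩
    have hfin := hL (fun u v : α => u = v ∨ Θ u v) hrcon (Or.inr hΘp)
    rcases hfin with h | h
    · exact hoi.ne h
    · exact claim1 i him hoi h
  · -- backward direction
    rintro ⟨q, hq, hq1, hq2, hcg, hqe⟩
    intro r hr hrp
    have hrq : r q.1 q.2 := by
      have key := hcg (fun u v => r u v ∧ u ≠ m ∧ v ≠ m) ?_ ⟨hrp, hpm.1, hpm.2⟩
      · exact key.1
      · obtain ⟨⟨hrefl, hsymm, htrans⟩, hcompat⟩ := hr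
        exact ⟨fun u hu => ⟨hrefl u, hu, hu⟩, fun u v h => ⟨hsymm h.1, h.2.2, h.2.1⟩,
          fun u v w h1 h2 => ⟨htrans h1.1 h2.1, h1.2.1, h2.2.2⟩,
          fun u v h => ⟨h.2.1, h.2.2⟩,
          fun a' b' c' d' h1 h2 =>
            ⟨⟨(hcompat _ _ _ _ h1.1 h2.1).1, hjoinm _ _ h1.2.1 h2.2.1, hjoinm _ _ h1.2.2 h2.2.2⟩,
             (hcompat _ _ _ _ h1.1 h2.1).2, hmeetm _ _ h1.2.1 h2.2.1, hmeetm _ _ h1.2.2 h2.2.2⟩⟩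
    rcases hqe with h | h
    · exact lemA r hr q.1 (h ▸ hq) hq1 (h ▸ hrq)
    · exact lemB r hr q.2 (h ▸ hq) hq2 (h ▸ hrq)
end

section
/- Let L be a finite semimodular lattice, let m be a doubly irreducible element in a covering multi-diamond [o,i], K = L \ {m}, and let p be a prime interval in K. Then o ≡ i (mod con_L(p)) if and only if there is a prime interval q in K with 0_q ≡ 1_q (mod con_K(p)) and 1_q = i. -/
variable {α : Type*}

theorem stmt_11 [Lattice α] [Fintype α]
    (hsm : ∀ a b c : α, a ⋖ b → (a ⊔ c = b ⊔ c ∨ a ⊔ c ⋖ b ⊔ c))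
    (o m i : α)
    (hd : IsMultiDiamond o i) (hm : DoublyIrred o m i)
    (p : α × α) (hp : p.1 ⋖ p.2) (hpm : p.1 ≠ m ∧ p.2 ≠ m) :
    latCg p.1 p.2 o i ↔
      ∃ q : α × α, q.1 ⋖ q.2 ∧ q.1 ≠ m ∧ q.2 ≠ m ∧
        cgOn {x : α | x ≠ m} p.1 p.2 q.1 q.2 ∧ q.2 = i := by
  obtain ⟨hom, hmi, hlow, hup⟩ := hm
  obtain ⟨hoi, hcls, u, v, w, hou, hui, hov, hvi, how, hwi, huv, huw, hvw⟩ := hd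
  have hom' : o < m := hom.lt
  have hmi' : m < i := hmi.lt
  have hOne : o ≠ m := hom'.ne
  have hIne : i ≠ m := hmi'.ne'
  obtain ⟨x1, x2, hx1o, hx1i, hx2o, hx2i, h12, hx1m, hx2m⟩ :
      ∃ x1 x2 : α, (o ⋖ x1) ∧ (x1 ⋖ i) ∧ (o ⋖ x2) ∧ (x2 ⋖ i) ∧ x1 ≠ x2 ∧ x1 ≠ m ∧ x2 ≠ m := by
    rcases eq_or_ne u m with rfl | hum
    · exact ⟨v, w, hov, hvi, how, hwi, hvw, Ne.symm huv, Ne.symm huw⟩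
    · rcases eq_or_ne v m with rfl | hvm
      · exact ⟨u, w, hou, hui, how, hwi, huw, hum, Ne.symm hvw⟩
      · exact ⟨u, v, hou, hui, hov, hvi, huv, hum, hvm⟩
  have hlt_le_o : ∀ a : α, a < m → a ≤ o := by
    intro a ha
    obtain ⟨c, hac, hcm⟩ := ha.exists_le_covby
    exact (hlow c hcm) ▸ hac
  have hlt_le_i : ∀ a : α, m < a → i ≤ a := by
    intro a ha
    obtain ⟨c, hmc, hca⟩ := ha.exists_covby_le
    exact (hup c hmc) ▸ hca
  have hsup_ne : ∀ a b : α, a ≠ m → b ≠ m → a ⊔ b ≠ m := by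
    intro a b ha hb h
    have h1 : a ≤ o := hlt_le_o a (lt_of_le_of_ne (h ▸ (le_sup_left : a ≤ a ⊔ b)) ha)
    have h2 : b ≤ o := hlt_le_o b (lt_of_le_of_ne (h ▸ (le_sup_right : b ≤ a ⊔ b)) hb)
    have : m ≤ o := by rw [← h]; exact sup_le h1 h2
    exact hom'.not_ge this
  have hinf_ne : ∀ a b : α, a ≠ m → b ≠ m → a ⊓ b ≠ m := by
    intro a b ha hb h
    have hma : m ≤ a := by rw [← h]; exact inf_le_left
    have hmb : m ≤ b := by rw [← h]; exact inf_le_right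
    have h1 : i ≤ a := hlt_le_i a (lt_of_le_of_ne hma (Ne.symm ha))
    have h2 : i ≤ b := hlt_le_i b (lt_of_le_of_ne hmb (Ne.symm hb))
    have : i ≤ m := by rw [← h]; exact le_inf h1 h2
    exact hmi'.not_ge this
  have atom_sup : ∀ a b : α, o ⋖ a → a ⋖ i → o ⋖ b → b ⋖ i → a ≠ b → a ⊔ b = i := by
    intro a b hoa hai hob hbi hab
    have h1 : a < a ⊔ b := by
      rcases lt_or_eq_of_le (le_sup_left : a ≤ a ⊔ b) with h | h
      · exact h
      · exfalso
        have hba : b ≤ a := sup_eq_left.1 h.symm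
        rcases lt_or_eq_of_le hba with h' | h'
        · exact hoa.2 hob.lt h'
        · exact hab h'.symm
    have h2 : a ⊔ b ≤ i := sup_le hai.lt.le hbi.lt.le
    rcases lt_or_eq_of_le h2 with h | h
    · exact absurd h (hai.2 h1)
    · exact h
  have atom_inf : ∀ a b : α, o ⋖ a → o ⋖ b → b ⋖ i → a ≠ b → a ⊓ b = o := by
    intro a b hoa hob hbi hab
    have h1 : o ≤ a ⊓ b := le_inf hoa.lt.le hob.lt.le
    have h2 : a ⊓ b < b := by
      rcases lt_or_eq_of_le (inf_le_right : a ⊓ b ≤ b) with h | h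
      · exact h
      · exfalso
        have hba : b ≤ a := inf_eq_right.1 h
        rcases lt_or_eq_of_le hba with h' | h'
        · exact hoa.2 hob.lt h'
        · exact hab h'.symm
    rcases lt_or_eq_of_le h1 with h | h
    · exact absurd h2 (hob.2 h)
    · exact h.symm
  have cover_le_i : ∀ w1 : α, o ⋖ w1 → w1 ≤ i := by
    intro w1 h
    rcases hsm o w1 m h with he | hc
    · have h1 : w1 ⊔ m = m := by rw [← he]; exact sup_eq_right.2 hom'.le
      exact (le_sup_left.trans h1.le).trans hmi'.le
    · rw [sup_eq_right.2 hom'.le] at hc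
      have h1 := hup _ hc
      exact le_sup_left.trans h1.le
  have hjoin : ∀ a : α, a ≠ m → ¬ a ≤ o → m ⊔ a = i ⊔ a := by
    intro a ha hao
    have h1 : m < m ⊔ a := by
      rcases lt_or_eq_of_le (le_sup_left : m ≤ m ⊔ a) with h | h
      · exact h
      · exfalso
        have : a ≤ m := sup_eq_left.1 h.symm
        exact hao (hlt_le_o a (lt_of_le_of_ne this ha))
    have h2 : i ≤ m ⊔ a := hlt_le_i _ h1
    exact le_antisymm (sup_le (hmi'.le.trans le_sup_left) le_sup_right)
      (sup_le h2 le_sup_right)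
  have hmeet : ∀ a : α, a ≠ m → ¬ i ≤ a → m ⊓ a = o ⊓ a := by
    intro a ha hia
    have h1 : m ⊓ a < m := by
      rcases lt_or_eq_of_le (inf_le_left : m ⊓ a ≤ m) with h | h
      · exact h
      · exfalso
        have hma : m ≤ a := by rw [← h]; exact inf_le_right
        rcases lt_or_eq_of_le hma with h' | h'
        · exact hia (hlt_le_i a h')
        · exact ha h'.symm
    have h2 : m ⊓ a ≤ o := hlt_le_o _ h1
    exact le_antisymm (le_inf h2 inf_le_right) (inf_le_inf_right a hom'.le)
  -- ρ machinery
  have hcon_all : IsConOn {x : α | x ≠ m} (fun a b : α => a ≠ m ∧ b ≠ m) :=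
    ⟨fun x hx => ⟨hx, hx⟩, fun _ _ h => ⟨h.2, h.1⟩, fun _ _ _ h1 h2 => ⟨h1.1, h2.2⟩,
     fun _ _ h => ⟨h.1, h.2⟩,
     fun a b c d h1 h2 => ⟨⟨hsup_ne _ _ h1.1 h2.1, hsup_ne _ _ h1.2 h2.2⟩,
       ⟨hinf_ne _ _ h1.1 h2.1, hinf_ne _ _ h1.2 h2.2⟩⟩⟩
  have hρ_mem : ∀ a b : α, cgOn {x : α | x ≠ m} p.1 p.2 a b → a ≠ m ∧ b ≠ m :=
    fun a b h => h _ hcon_all ⟨hpm.1, hpm.2⟩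
  have hρ_refl : ∀ a : α, a ≠ m → cgOn {x : α | x ≠ m} p.1 p.2 a a :=
    fun a ha r hr _ => hr.1 a ha
  have hρ_symm : ∀ a b : α, cgOn {x : α | x ≠ m} p.1 p.2 a b →
      cgOn {x : α | x ≠ m} p.1 p.2 b a :=
    fun a b h r hr hpr => hr.2.1 _ _ (h r hr hpr)
  have hρ_trans : ∀ a b c : α, cgOn {x : α | x ≠ m} p.1 p.2 a b →
      cgOn {x : α | x ≠ m} p.1 p.2 b c → cgOn {x : α | x ≠ m} p.1 p.2 a c :=
    fun a b c h1 h2 r hr hpr => hr.2.2.1 _ _ _ (h1 r hr hpr) (h2 r hr hpr)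
  have hρ_compat : ∀ a b c d : α, cgOn {x : α | x ≠ m} p.1 p.2 a b →
      cgOn {x : α | x ≠ m} p.1 p.2 c d →
      cgOn {x : α | x ≠ m} p.1 p.2 (a ⊔ c) (b ⊔ d) ∧
        cgOn {x : α | x ≠ m} p.1 p.2 (a ⊓ c) (b ⊓ d) :=
    fun a b c d h1 h2 =>
      ⟨fun r hr hpr => (hr.2.2.2.2 _ _ _ _ (h1 r hr hpr) (h2 r hr hpr)).1,
       fun r hr hpr => (hr.2.2.2.2 _ _ _ _ (h1 r hr hpr) (h2 r hr hpr)).2⟩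
  have hρ_p : cgOn {x : α | x ≠ m} p.1 p.2 p.1 p.2 := fun _ _ hpr => hpr
  constructor
  · -- forward direction
    intro hL
    by_contra H
    have mk : ∀ c : α, c ⋖ i → c ≠ m → cgOn {x : α | x ≠ m} p.1 p.2 c i → False := by
      intro c hc hcm hρc
      exact H ⟨(c, i), hc, hcm, hIne, hρc, rfl⟩
    have hρoi : cgOn {x : α | x ≠ m} p.1 p.2 o i → False := by
      intro h
      have h2 := (hρ_compat _ _ _ _ h (hρ_refl x1 hx1m)).1
      rw [sup_eq_right.2 hx1o.lt.le, sup_eq_left.2 hx1i.lt.le] at h2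
      exact mk x1 hx1i hx1m h2
    have HA : ∀ e : α, e ≠ m → e < i → cgOn {x : α | x ≠ m} p.1 p.2 e i → False := by
      intro e hem hei hρe
      obtain ⟨c, hec, hci⟩ := hei.exists_le_covby
      rcases eq_or_ne c m with rfl | hcm
      · have heo : e ≤ o := hlt_le_o e (lt_of_le_of_ne hec hem)
        have h2 := (hρ_compat _ _ _ _ hρe (hρ_refl x1 hx1m)).1
        rw [sup_eq_right.2 (heo.trans hx1o.lt.le), sup_eq_left.2 hx1i.lt.le] at h2
        exact mk x1 hx1i hx1m h2
      · have h2 := (hρ_compat _ _ _ _ hρe (hρ_refl c hcm)).1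
        rw [sup_eq_right.2 hec, sup_eq_left.2 hci.lt.le] at h2
        exact mk c hci hcm h2
    have HB : ∀ a b : α, cgOn {x : α | x ≠ m} p.1 p.2 a b → a ≤ o → b ≤ o := by
      intro a b hab hao
      by_contra hbo
      have hbm := (hρ_mem _ _ hab).2
      have h2 := (hρ_compat _ _ _ _ hab (hρ_refl o hOne)).1
      rw [sup_eq_right.2 hao] at h2
      have hwo : o < b ⊔ o :=
        lt_of_le_of_ne le_sup_right (fun h => hbo (sup_eq_right.1 h.symm))
      obtain ⟨w1, how1, hw1w⟩ := hwo.exists_covby_le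
      have hw1i : w1 ≤ i := cover_le_i w1 how1
      have hwm : b ⊔ o ≠ m := hsup_ne _ _ hbm hOne
      rcases eq_or_ne w1 m with heqm | hw1m
      · have h3 := (hρ_compat _ _ _ _ h2 (hρ_refl i hIne)).2
        rw [inf_eq_left.2 hoi.le] at h3
        have hmle : m ≤ (b ⊔ o) ⊓ i := le_inf (heqm ▸ hw1w) hmi'.le
        have hne : (b ⊔ o) ⊓ i ≠ m := hinf_ne _ _ hwm hIne
        have hile : i ≤ (b ⊔ o) ⊓ i := hlt_le_i _ (lt_of_le_of_ne hmle (Ne.symm hne))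
        have heq : (b ⊔ o) ⊓ i = i := le_antisymm inf_le_right hile
        rw [heq] at h3
        exact hρoi h3
      · have h3 := (hρ_compat _ _ _ _ h2 (hρ_refl w1 hw1m)).1
        rw [sup_eq_right.2 how1.lt.le, sup_eq_left.2 hw1w] at h3
        have hρow1 : cgOn {x : α | x ≠ m} p.1 p.2 o w1 :=
          hρ_trans _ _ _ h2 (hρ_symm _ _ h3)
        rcases eq_or_ne w1 i with rfl | hw1i'
        · exact hρoi hρow1
        · have hw1ci : w1 ⋖ i := by
            rcases hcls w1 ⟨how1.lt.le, hw1i⟩ with h | h | h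
            · exact absurd h how1.lt.ne'
            · exact absurd h hw1i'
            · exact h.2
          obtain ⟨x', hx'o, hx'i, hx'm, hx'w⟩ :
              ∃ x' : α, (o ⋖ x') ∧ (x' ⋖ i) ∧ x' ≠ m ∧ x' ≠ w1 := by
            rcases eq_or_ne w1 x1 with rfl | h
            · exact ⟨x2, hx2o, hx2i, hx2m, Ne.symm h12⟩
            · exact ⟨x1, hx1o, hx1i, hx1m, Ne.symm h⟩
          have h4 := (hρ_compat _ _ _ _ hρow1 (hρ_refl x' hx'm)).1
          rw [sup_eq_right.2 hx'o.lt.le,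
            atom_sup w1 x' how1 hw1ci hx'o hx'i (fun hh => hx'w hh.symm)] at h4
          exact mk x' hx'i hx'm h4
    have HC : ∀ a b : α, cgOn {x : α | x ≠ m} p.1 p.2 a b → i ≤ a → i ≤ b := by
      intro a b hab hia
      by_contra hib
      have h2 := (hρ_compat _ _ _ _ hab (hρ_refl i hIne)).2
      rw [inf_eq_right.2 hia] at h2
      have hlt : b ⊓ i < i :=
        lt_of_le_of_ne inf_le_right (fun h => hib (inf_eq_right.1 h))
      have hne : b ⊓ i ≠ m := hinf_ne _ _ (hρ_mem _ _ hab).2 hIne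
      exact HA _ hne hlt (hρ_symm _ _ h2)
    -- the extension congruence on L : ρ together with the singleton block {m}
    have compat_m : ∀ c d : α, cgOn {x : α | x ≠ m} p.1 p.2 c d →
        ((m ⊔ c = m ∧ m ⊔ d = m) ∨ cgOn {x : α | x ≠ m} p.1 p.2 (m ⊔ c) (m ⊔ d)) ∧
        ((m ⊓ c = m ∧ m ⊓ d = m) ∨ cgOn {x : α | x ≠ m} p.1 p.2 (m ⊓ c) (m ⊓ d)) := by
      intro c d hcd
      have hcm := (hρ_mem _ _ hcd).1
      have hdm := (hρ_mem _ _ hcd).2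
      constructor
      · by_cases hc : c ≤ o
        · have hd : d ≤ o := HB _ _ hcd hc
          exact Or.inl ⟨sup_eq_left.2 (hc.trans hom'.le), sup_eq_left.2 (hd.trans hom'.le)⟩
        · have hd : ¬ d ≤ o := fun hh => hc (HB _ _ (hρ_symm _ _ hcd) hh)
          right
          rw [hjoin c hcm hc, hjoin d hdm hd]
          exact (hρ_compat _ _ _ _ (hρ_refl i hIne) hcd).1
      · by_cases hc : i ≤ c
        · have hd : i ≤ d := HC _ _ hcd hc
          exact Or.inl ⟨inf_eq_left.2 (hmi'.le.trans hc), inf_eq_left.2 (hmi'.le.trans hd)⟩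
        · have hd : ¬ i ≤ d := fun hh => hc (HC _ _ (hρ_symm _ _ hcd) hh)
          right
          rw [hmeet c hcm hc, hmeet d hdm hd]
          exact (hρ_compat _ _ _ _ (hρ_refl o hOne) hcd).2
    have hrcon : IsLatCon
        (fun a b : α => (a = m ∧ b = m) ∨ cgOn {x : α | x ≠ m} p.1 p.2 a b) := by
      have hrefl : ∀ a : α, (a = m ∧ a = m) ∨ cgOn {x : α | x ≠ m} p.1 p.2 a a := by
        intro a
        rcases eq_or_ne a m with rfl | ha
        · exact Or.inl ⟨rfl, rfl⟩
        · exact Or.inr (hρ_refl a ha)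
      have hsymm : ∀ a b : α,
          ((a = m ∧ b = m) ∨ cgOn {x : α | x ≠ m} p.1 p.2 a b) →
          ((b = m ∧ a = m) ∨ cgOn {x : α | x ≠ m} p.1 p.2 b a) := by
        rintro a b (⟨rfl, rfl⟩ | h)
        · exact Or.inl ⟨rfl, rfl⟩
        · exact Or.inr (hρ_symm _ _ h)
      have htrans : ∀ a b c : α,
          ((a = m ∧ b = m) ∨ cgOn {x : α | x ≠ m} p.1 p.2 a b) →
          ((b = m ∧ c = m) ∨ cgOn {x : α | x ≠ m} p.1 p.2 b c) →
          ((a = m ∧ c = m) ∨ cgOn {x : α | x ≠ m} p.1 p.2 a c) := by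
        rintro a b c (⟨rfl, rfl⟩ | h1) (⟨hbm, rfl⟩ | h2)
        · exact Or.inl ⟨rfl, rfl⟩
        · exact absurd rfl (hρ_mem _ _ h2).1
        · exact absurd hbm (hρ_mem _ _ h1).2
        · exact Or.inr (hρ_trans _ _ _ h1 h2)
      refine ⟨⟨hrefl, fun {a b} h => hsymm a b h, fun {a b c} h1 h2 => htrans a b c h1 h2⟩, ?_⟩
      rintro a b c d (⟨ha, hb⟩ | h1) (⟨hc, hd⟩ | h2)
      · rw [ha, hb, hc, hd]
        exact ⟨Or.inl ⟨sup_idem m, sup_idem m⟩, Or.inl ⟨inf_idem m, inf_idem m⟩⟩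
      · rw [ha, hb]
        exact compat_m _ _ h2
      · rw [hc, hd, sup_comm a m, sup_comm b m, inf_comm a m, inf_comm b m]
        exact compat_m a b h1
      · exact ⟨Or.inr (hρ_compat _ _ _ _ h1 h2).1, Or.inr (hρ_compat _ _ _ _ h1 h2).2⟩
    have hfin := hL (fun a b : α => (a = m ∧ b = m) ∨ cgOn {x : α | x ≠ m} p.1 p.2 a b)
      hrcon (Or.inr hρ_p)
    rcases hfin with ⟨h1, _⟩ | h
    · exact hOne h1
    · exact hρoi h
  · -- backward direction
    rintro ⟨q, hq, hq1m, hq2m, hcg, hq2i⟩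
    intro r hr hrp
    have hre := hr.1
    have hcmp := hr.2
    have hcon : IsConOn {x : α | x ≠ m} (fun a b : α => a ≠ m ∧ b ≠ m ∧ r a b) :=
      ⟨fun xx hx => ⟨hx, hx, hre.refl xx⟩,
       fun _ _ h => ⟨h.2.1, h.1, hre.symm h.2.2⟩,
       fun _ _ _ h1 h2 => ⟨h1.1, h2.2.1, hre.trans h1.2.2 h2.2.2⟩,
       fun _ _ h => ⟨h.1, h.2.1⟩,
       fun a b c d h1 h2 =>
        ⟨⟨hsup_ne _ _ h1.1 h2.1, hsup_ne _ _ h1.2.1 h2.2.1,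
          (hcmp _ _ _ _ h1.2.2 h2.2.2).1⟩,
         ⟨hinf_ne _ _ h1.1 h2.1, hinf_ne _ _ h1.2.1 h2.2.1,
          (hcmp _ _ _ _ h1.2.2 h2.2.2).2⟩⟩⟩
    have h1 := hcg _ hcon ⟨hpm.1, hpm.2, hrp⟩
    have hai : r q.1 i := by rw [← hq2i]; exact h1.2.2
    have hqi : q.1 ⋖ i := by rw [← hq2i]; exact hq
    have h2 : q.1 ⊓ m ≤ o := by
      have hne : q.1 ⊓ m ≠ m := by
        intro h
        have hmq : m ≤ q.1 := by rw [← h]; exact inf_le_left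
        rcases lt_or_eq_of_le hmq with h' | h'
        · exact hqi.lt.not_ge (hlt_le_i _ h')
        · exact hq1m h'.symm
      exact hlt_le_o _ (lt_of_le_of_ne inf_le_right hne)
    have h3 : r (q.1 ⊓ m) m := by
      have h := (hcmp _ _ _ _ hai (hre.refl m)).2
      rwa [inf_eq_right.2 hmi'.le] at h
    have h4 : r o m := by
      have h := (hcmp _ _ _ _ h3 (hre.refl o)).1
      rwa [sup_eq_right.2 h2, sup_eq_left.2 hom'.le] at h
    have hx1r : r x1 i := by
      have h := (hcmp _ _ _ _ h4 (hre.refl x1)).1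
      rwa [sup_eq_right.2 hx1o.lt.le,
        atom_sup m x1 hom hmi hx1o hx1i (Ne.symm hx1m)] at h
    have hx2r : r x2 i := by
      have h := (hcmp _ _ _ _ h4 (hre.refl x2)).1
      rwa [sup_eq_right.2 hx2o.lt.le,
        atom_sup m x2 hom hmi hx2o hx2i (Ne.symm hx2m)] at h
    have h5 : r o x2 := by
      have h := (hcmp _ _ _ _ hx1r (hre.refl x2)).2
      rwa [atom_inf x1 x2 hx1o hx2o hx2i h12, inf_eq_right.2 hx2i.lt.le] at h
    exact hre.trans h5 hx2r
end

section
/- Let L be a finite semimodular lattice containing a doubly irreducible element m. Then the sublattice K = L \ {m} is also semimodular. -/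
variable {α : Type*}

/-- The covering relation inside a subset `K`. -/
def CovIn [Lattice α] (K : Set α) (a b : α) : Prop :=
  a ∈ K ∧ b ∈ K ∧ a < b ∧ ∀ z ∈ K, a < z → z < b → False

lemma covin_cases [Lattice α] {o m i : α} (hm : DoublyIrred o m i) {a b : α}
    (h : CovIn {x : α | x ≠ m} a b) : a ⋖ b ∨ (a = o ∧ b = i) := by
  obtain ⟨ha, hb, hab, hno⟩ := h
  by_cases hc : a ⋖ b
  · exact Or.inl hc
  · right
    obtain ⟨z, haz, hzb⟩ := (not_covBy_iff hab).mp hc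
    have hzm : z = m := by
      by_contra hz
      exact hno z hz haz hzb
    subst hzm
    have ham : a ⋖ z := by
      refine ⟨haz, fun w haw hwz => ?_⟩
      exact hno w (ne_of_lt hwz) haw (hwz.trans hzb)
    have hmb : z ⋖ b := by
      refine ⟨hzb, fun w hzw hwb => ?_⟩
      exact hno w (ne_of_gt hzw) (haz.trans hzw) hwb
    exact ⟨hm.2.2.1 a ham, hm.2.2.2 b hmb⟩

theorem stmt_12 [Lattice α] [Fintype α]
    (hsm : ∀ a b c : α, b ≠ c → a ⋖ b → a ⋖ c → b ⋖ (b ⊔ c) ∧ c ⋖ (b ⊔ c))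
    (o m i : α) (hm : DoublyIrred o m i) :
    ∀ a b c : α, b ≠ c → CovIn {x : α | x ≠ m} a b → CovIn {x : α | x ≠ m} a c →
      CovIn {x : α | x ≠ m} b (b ⊔ c) ∧ CovIn {x : α | x ≠ m} c (b ⊔ c) := by
  intro a b c hbc hab hac
  have hbm : b ≠ m := hab.2.1
  have hcm : c ≠ m := hac.2.1
  -- rule out the (o,i) cases
  have key : ∀ x y : α, x ≠ y → x ≠ m → CovIn {x : α | x ≠ m} a x → CovIn {x : α | x ≠ m} a y →
      (a = o ∧ y = i) → False := by
    intro x y hxy hxm hax hay hh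
    obtain ⟨hao, hyi⟩ := hh
    rcases covin_cases hm hax with hox | ⟨_, hxi⟩
    · have hox' : o ⋖ x := hao ▸ hox
      have hxm' : m ≠ x := fun h => hxm h.symm
      obtain ⟨h1, h2⟩ := hsm o m x hxm' hm.1 hox'
      have heq : m ⊔ x = i := hm.2.2.2 _ h1
      have hxi : x < i := by have := h2.lt; rwa [heq] at this
      exact hay.2.2.2 x hxm hax.2.2.1 (hyi ▸ hxi)
    · exact hxy (hxi.trans hyi.symm)
  rcases covin_cases hm hab with hab' | hoi
  · rcases covin_cases hm hac with hac' | hoi'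
    · obtain ⟨h1, h2⟩ := hsm a b c hbc hab' hac'
      have hsup : b ⊔ c ≠ m := by
        intro h
        rw [h] at h1 h2
        exact hbc ((hm.2.2.1 b h1).trans (hm.2.2.1 c h2).symm)
      refine ⟨⟨hbm, hsup, h1.lt, fun z _ h h' => h1.2 h h'⟩,
        ⟨hcm, hsup, h2.lt, fun z _ h h' => h2.2 h h'⟩⟩
    · exact (key b c hbc hbm hab hac hoi').elim
  · exact (key c b (Ne.symm hbc) hcm hac hab hoi).elim
end

section
/- Let L be any lattice and let p, q be prime intervals of L with p SPS projective to q, meaning: either p = q, or there is a prime interval r with p up-perspective to r and a sequence r = r_0, r_1, ..., r_n = q of prime intervals where each step is either a down-perspectivity or a swing. Then con(p) ≥ con(q). -/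
variable {α : Type*}

/-- `p` is up-perspective to `r`. -/
def UpPersp [Lattice α] (p r : α × α) : Prop := p.2 ⊓ r.1 = p.1 ∧ p.2 ⊔ r.1 = r.2

/-- `p` is down-perspective to `q`. -/
def DownPersp [Lattice α] (p q : α × α) : Prop := p.1 ⊔ q.2 = p.2 ∧ p.1 ⊓ q.2 = q.1

/-- `p` is SPS projective to `q`. -/
def SPSProj [Lattice α] (p q : α × α) : Prop :=
  p = q ∨ ∃ r : α × α, r.1 ⋖ r.2 ∧ UpPersp p r ∧
    ∃ (n : ℕ) (s : ℕ → α × α), s 0 = r ∧ s n = q ∧ (∀ k ≤ n, (s k).1 ⋖ (s k).2) ∧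
      ∀ k < n, DownPersp (s k) (s (k+1)) ∨ Swings (s k) (s (k+1))

theorem stmt_14 [Lattice α] (p q : α × α) (hp : p.1 ⋖ p.2) (hq : q.1 ⋖ q.2)
    (h : SPSProj p q) : latCg p.1 p.2 q.1 q.2 := by
  rcases h with rfl | ⟨r, hrc, ⟨hmeet, hjoin⟩, n, s, hs0, hsn, hcov, hstep⟩
  · intro c hc h1; exact h1
  intro c hc hp12
  -- from p collapse r via up-perspectivity
  have hp1r1 : p.1 ≤ r.1 := by rw [← hmeet]; exact inf_le_right
  have hcr : c r.1 r.2 := by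
    have h1 := (hc.2 p.1 p.2 r.1 r.1 hp12 (hc.1.refl r.1)).1
    rwa [sup_eq_right.mpr hp1r1, hjoin] at h1
  -- propagate along the sequence
  have key : ∀ k, k ≤ n → c (s k).1 (s k).2 := by
    intro k
    induction k with
    | zero => intro _; rw [hs0]; exact hcr
    | succ k ih =>
      intro hk
      have hck := ih (le_of_lt (Nat.lt_of_succ_le hk))
      rcases hstep k (Nat.lt_of_succ_le hk) with ⟨hj, hm⟩ | hsw
      · -- down-perspectivity
        have h2 := (hc.2 _ _ _ _ hck (hc.1.refl (s (k+1)).2)).2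
        rw [hm] at h2
        have hle : (s (k+1)).2 ≤ (s k).2 := by rw [← hj]; exact le_sup_right
        rwa [inf_eq_right.mpr hle] at h2
      · -- swing
        obtain ⟨_, _, _, hi, w, hwcov, hw1, hw2, u, y, o, h7 | h7⟩ := hsw
        · obtain ⟨h1, h2, h3, h4, h5, h6, h7', h8, h9, _, _, _, _,
            _, _, h16, _, _, _, _, h21, _, _, _, _⟩ := h7
          -- c x i → c u m → c a i  (x = (s k).1, a = (s (k+1)).1, m = w, i = (s k).2)
          have hum : c u w := by
            have := (hc.2 _ _ w w hck (hc.1.refl w)).2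
            rwa [h16, inf_eq_right.mpr h7'.le] at this
          have := (hc.2 _ _ (s (k+1)).1 (s (k+1)).1 hum (hc.1.refl _)).1
          rw [sup_eq_right.mpr (h4.le.trans h5.le), sup_comm, h21] at this
          rwa [← hi]
        · obtain ⟨h1, h2, h3, h4, h5, h6, h7', h8, h9, _, _, _, _,
            _, _, h16, _, _, _, h20, _, _, _, _, _⟩ := h7
          -- c m i → c u x → c a i  (x = w, a = (s (k+1)).1, m = (s k).1, i = (s k).2)
          have hux : c u w := by
            have := (hc.2 _ _ w w hck (hc.1.refl w)).2
            rwa [inf_comm, h16, inf_eq_right.mpr h3.le] at this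
          have := (hc.2 _ _ (s (k+1)).1 (s (k+1)).1 hux (hc.1.refl _)).1
          rw [sup_eq_right.mpr (h4.le.trans h5.le), h20] at this
          rwa [← hi]
  have := key n le_rfl
  rwa [hsn] at this
end

section
/- Let L be a finite lattice, m a doubly irreducible element in a covering multi-diamond [o,i], and K = L \ {m}. Suppose a prime interval p ⊆ K satisfies o ≡ i (mod con_L(p)), and in a prime-projectivity sequence from p to [m,i] let r be the last prime interval contained in K followed by r' containing m with r prime-perspective down to r'. If r' = [m,i], then 0_r ⊓ i ≤ o, and consequently r is prime-perspective down to [a,i] for every atom a ≠ m of the multi-diamond [o,i]. -/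
variable {α : Type*}

theorem stmt_16 [Lattice α] [Fintype α] (o m i : α)
    (hd : IsMultiDiamond o i) (hm : DoublyIrred o m i)
    (p : α × α) (hp : p.1 ⋖ p.2) (hpm : p.1 ≠ m ∧ p.2 ≠ m)
    (hoi : latCg p.1 p.2 o i)
    (r : α × α) (hr : r.1 ⋖ r.2) (hrm : r.1 ≠ m ∧ r.2 ≠ m)
    (hpp : r.1 ⊔ i = r.2 ∧ r.1 ⊓ i ≤ m) :
    r.1 ⊓ i ≤ o ∧
      ∀ a : α, o ⋖ a → a ⋖ i → a ≠ m → (r.1 ⊔ i = r.2 ∧ r.1 ⊓ i ≤ a) := by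
  have key : r.1 ⊓ i ≤ o := by
    rcases hpp.2.lt_or_eq with h | h
    · obtain ⟨x, hx, hxm⟩ := h.exists_le_covby
      exact hx.trans_eq (hm.2.2.1 x hxm)
    · exfalso
      have hmr : m ≤ r.1 := h ▸ inf_le_left
      have hmr' : m < r.1 := lt_of_le_of_ne hmr (Ne.symm hrm.1)
      obtain ⟨x, hmx, hxr⟩ := hmr'.exists_covby_le
      have : i ≤ r.1 := (hm.2.2.2 x hmx) ▸ hxr
      have : r.1 ⊓ i = i := inf_eq_right.2 this
      rw [this] at h
      exact hm.2.1.ne (h.symm) |>.elim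
  refine ⟨key, fun a hoa _ _ => ⟨hpp.1, key.trans hoa.le⟩⟩
end

section
/- Let L be a finite semimodular lattice and let x, a, m be three distinct lower covers of an element i such that: m is join-irreducible with lower cover o, a covers o, a = (x ⊓ a) ⊔ o, and x ⊓ m < o < a. Then the seven elements x ⊓ m, x ⊓ a, o, x, a, m, i form a sublattice of L in which the three pairwise meets of {x, a, m} are x ⊓ a, o = a ⊓ m and x ⊓ m, and all pairwise joins of the four lower elements with appropriate elements give the S7 multiplication table; in particular (x ⊓ a) ⊔ m = i and o ⊔ x = i. -/
variable {α : Type*}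

theorem stmt_17 [Lattice α] [Fintype α]
    (hsm : ∀ a b c : α, a ⋖ b → (a ⊔ c = b ⊔ c ∨ a ⊔ c ⋖ b ⊔ c))
    (x a m i o : α)
    (hx : x ⋖ i) (ha : a ⋖ i) (hmi : m ⋖ i)
    (hxa : x ≠ a) (hxm : x ≠ m) (ham : a ≠ m)
    (hom : o ⋖ m) (hji : ∀ z : α, z ⋖ m → z = o)
    (hoa : o ⋖ a) (hgen : (x ⊓ a) ⊔ o = a)
    (hum : x ⊓ m < o) :
    a ⊓ m = o ∧ x ⊓ o = x ⊓ m ∧ (x ⊓ a) ⊓ o = x ⊓ m ∧ (x ⊓ a) ⊓ m = x ⊓ m ∧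
    x ⊔ a = i ∧ a ⊔ m = i ∧ x ⊔ m = i ∧ (x ⊓ a) ⊔ m = i ∧ o ⊔ x = i := by
  -- two elements covered by i which are comparable must be equal
  have key : ∀ u v : α, u ⋖ i → u ≤ v → v < i → v = u := by
    intro u v hu huv hv
    rcases huv.lt_or_eq with h | h
    · exact absurd hv (hu.2 h)
    · exact h.symm
  -- joins of distinct coatoms are i
  have jkey : ∀ u v : α, u ⋖ i → v ⋖ i → u ≠ v → u ⊔ v = i := by
    intro u v hu hv huv
    rcases (sup_le hu.1.le hv.1.le).lt_or_eq with h | h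
    · exfalso
      have := key u (u ⊔ v) hu le_sup_left h
      exact huv (key v u hv (this ▸ le_sup_right) hu.1)
    · exact h
  have h1 : a ⊓ m = o := by
    have hne : a ⊓ m ≠ m := by
      intro h
      exact ham (key m a hmi (inf_eq_right.mp h) ha.1)
    have hle : o ≤ a ⊓ m := le_inf hoa.1.le hom.1.le
    rcases hle.lt_or_eq with h | h
    · exact absurd (lt_of_le_of_ne inf_le_right hne) (hom.2 h)
    · exact h.symm
  have h2 : x ⊓ o = x ⊓ m := by
    exact le_antisymm (inf_le_inf_left x hom.1.le) (le_inf inf_le_left hum.le)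
  have h3 : (x ⊓ a) ⊓ o = x ⊓ m := by
    rw [inf_assoc, inf_eq_right.mpr hoa.1.le, h2]
  have h4 : (x ⊓ a) ⊓ m = x ⊓ m := by
    rw [inf_assoc, h1, h2]
  have h8 : (x ⊓ a) ⊔ m = i := by
    rcases (sup_le (inf_le_left.trans hx.1.le) hmi.1.le).lt_or_eq with h | h
    · exfalso
      have hm : (x ⊓ a) ⊔ m = m := key m _ hmi le_sup_right h
      have hxam : x ⊓ a ≤ o := h1 ▸ le_inf inf_le_right (le_sup_left.trans hm.le)
      have : a = o := by rw [← hgen, sup_eq_right.mpr hxam]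
      exact absurd (this ▸ hoa.1) (lt_irrefl o)
    · exact h
  have h9 : o ⊔ x = i := by
    rcases (sup_le (hom.1.le.trans hmi.1.le) hx.1.le).lt_or_eq with h | h
    · exfalso
      have hm : o ⊔ x = x := key x _ hx le_sup_right h
      exact absurd (le_inf (le_sup_left.trans hm.le) hom.1.le) hum.not_ge
    · exact h
  exact ⟨h1, h2, h3, h4, jkey x a hx ha hxa, jkey a m ha hmi ham, jkey x m hx hmi hxm, h8, h9⟩
end

section
/- Let L be a finite lattice and p a prime interval of L whose endpoints both differ from a given doubly irreducible element m, and suppose 0_p ⊓ 1_q is meet-reducible for a second such prime interval q with p prime-perspective down to q in L. Then all elements witnessing this prime-perspectivity (namely 0_p, 1_p, 0_q, 1_q, and 0_p ⊓ 1_q) lie in K = L \ {m}, so the prime-perspectivity holds in K. -/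
variable {α : Type*}

theorem stmt_18 [Lattice α] [Fintype α] (o m i : α) (hm : DoublyIrred o m i)
    (p q : α × α) (hp : p.1 ⋖ p.2) (hq : q.1 ⋖ q.2)
    (hpm : p.1 ≠ m ∧ p.2 ≠ m) (hqm : q.1 ≠ m ∧ q.2 ≠ m)
    (hpp : p.1 ⊔ q.2 = p.2 ∧ p.1 ⊓ q.2 ≤ q.1)
    (hred : ∃ u v : α, p.1 ⊓ q.2 < u ∧ p.1 ⊓ q.2 < v ∧ u ⊓ v = p.1 ⊓ q.2) :
    p.1 ⊓ q.2 ≠ m := by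
  intro h
  obtain ⟨u, v, hu, hv, huv⟩ := hred
  rw [h] at hu hv huv
  obtain ⟨zu, hzu, hzu'⟩ := exists_covBy_le_of_lt hu
  obtain ⟨zv, hzv, hzv'⟩ := exists_covBy_le_of_lt hv
  have hiu : i ≤ u := hm.2.2.2 zu hzu ▸ hzu'
  have hiv : i ≤ v := hm.2.2.2 zv hzv ▸ hzv'
  have : i ≤ m := huv ▸ le_inf hiu hiv
  exact absurd this (not_le_of_gt hm.2.1.lt)
end
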